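/- arXiv:1703.02362 — 9 statements merged into one kernel-verified Lean document; each statement's English description precedes it below -/
import Mathlib

section
/- Let E₁, …, E_m, F be normed spaces and let P : E₁ × ⋯ × E_m → F be an (n₁, …, n_m)-homogeneous polynomial. If P is continuous at the origin, then there exists a constant C ≥ 0 such that ‖P(x₁, …, x_m)‖ ≤ C‖x₁‖^{n₁} ⋯ ‖x_m‖^{n_m} for all (x₁, …, x_m) ∈ E₁ × ⋯ × E_m. -/
/-- `P : E₁ × ⋯ × E_m → F` is an `(n₁, …, n_m)`-homogeneous polynomial
(multipolynomial): separately, in each variable `i`, it is an `n i`-homogeneous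
polynomial, i.e. the diagonal of some `n i`-linear map. -/
def IsMultiPoly {m : ℕ} {E : Fin m → Type*} [∀ i, NormedAddCommGroup (E i)]
    [∀ i, NormedSpace ℝ (E i)] {F : Type*} [NormedAddCommGroup F] [NormedSpace ℝ F]
    (n : Fin m → ℕ) (P : (∀ i, E i) → F) : Prop :=
  ∀ (i : Fin m) (x : ∀ i, E i), ∃ A : MultilinearMap ℝ (fun _ : Fin (n i) => E i) F,
    ∀ y : E i, P (Function.update x i y) = A (fun _ => y)

theorem stmt0 {m : ℕ} {E : Fin m → Type*} [∀ i, NormedAddCommGroup (E i)]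
    [∀ i, NormedSpace ℝ (E i)] {F : Type*} [NormedAddCommGroup F] [NormedSpace ℝ F]
    (n : Fin m → ℕ) (P : (∀ i, E i) → F) (hP : IsMultiPoly n P)
    (hc : ContinuousAt P 0) :
    ∃ C : ℝ, 0 ≤ C ∧ ∀ x : ∀ i, E i, ‖P x‖ ≤ C * ∏ i, ‖x i‖ ^ (n i) := by
  classical
  -- homogeneity in a single coordinate
  have homog : ∀ (i : Fin m) (x : ∀ i, E i) (c : ℝ),
      P (Function.update x i (c • x i)) = c ^ (n i) • P x := by
    intro i x c
    obtain ⟨A, hA⟩ := hP i x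
    have h2 := hA (x i)
    rw [Function.update_eq_self] at h2
    have h3 : A (fun _ : Fin (n i) => c • x i) = c ^ (n i) • A (fun _ => x i) := by
      have := A.map_smul_univ (fun _ => c) (fun _ => x i)
      simpa [Finset.prod_const] using this
    rw [hA (c • x i), h3, ← h2]
  -- full scaling
  have scale : ∀ (x : ∀ i, E i) (c : Fin m → ℝ),
      P (fun i => c i • x i) = (∏ i, c i ^ n i) • P x := by
    intro x c
    have key : ∀ s : Finset (Fin m),
        P (fun i => if i ∈ s then c i • x i else x i)
          = (∏ i ∈ s, c i ^ n i) • P x := by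
      intro s
      induction s using Finset.induction_on with
      | empty => simp
      | @insert a s ha ih =>
        have hf : (fun i => if i ∈ insert a s then c i • x i else x i)
            = Function.update (fun i => if i ∈ s then c i • x i else x i) a
              (c a • (fun i => if i ∈ s then c i • x i else x i) a) := by
          funext j
          rcases eq_or_ne j a with rfl | hj
          · simp [ha]
          · simp [Function.update_of_ne hj, Finset.mem_insert, hj]
        rw [hf, homog, ih, smul_smul, Finset.prod_insert ha]
    simpa using key Finset.univ
  obtain ⟨δ, hδ, hδ'⟩ := Metric.continuousAt_iff.mp hc 1 one_pos
  set M : ℝ := ‖P 0‖ + 1 with hM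
  have hM0 : 0 < M := by positivity
  have bound : ∀ y : ∀ i, E i, (∀ i, ‖y i‖ < δ) → ‖P y‖ ≤ M := by
    intro y hy
    have hd : dist y 0 < δ := by
      rw [dist_pi_lt_iff hδ]
      intro i
      simpa [dist_zero_right] using hy i
    have h := hδ' hd
    rw [dist_eq_norm] at h
    have h2 : ‖P y‖ - ‖P 0‖ ≤ ‖P y - P 0‖ := norm_sub_norm_le _ _
    rw [hM]; linarith
  refine ⟨M * ∏ i, ((2/δ) ^ n i), ?_, ?_⟩
  · have : (0:ℝ) ≤ ∏ i, ((2/δ) ^ n i) :=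
      Finset.prod_nonneg (fun i _ => by positivity)
    positivity
  intro x
  by_cases hx : ∃ i, n i ≠ 0 ∧ x i = 0
  · obtain ⟨i, hni, hxi⟩ := hx
    have hPx : P x = 0 := by
      obtain ⟨A, hA⟩ := hP i x
      have e : Function.update x i (0 : E i) = x := by
        rw [← hxi, Function.update_eq_self]
      have h0 := hA 0
      rw [e] at h0
      rw [h0]
      exact A.map_coord_zero ⟨0, Nat.pos_of_ne_zero hni⟩ rfl
    have hz : (∏ j, ‖x j‖ ^ n j) = 0 :=
      Finset.prod_eq_zero (Finset.mem_univ i) (by rw [hxi]; simp [hni])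
    simp [hPx, hz]
  · push_neg at hx
    set c : Fin m → ℝ := fun i => if x i = 0 then 1 else (δ/2)/‖x i‖ with hc'
    have hcpos : ∀ i, 0 < c i := by
      intro i
      rcases eq_or_ne (x i) 0 with h | h
      · simp [hc', h]
      · simp only [hc', if_neg h]
        exact div_pos (by linarith) (norm_pos_iff.mpr h)
    have hy : ∀ i, ‖c i • x i‖ < δ := by
      intro i
      rcases eq_or_ne (x i) 0 with h | h
      · simpa [h] using hδ
      · have hxn : ‖x i‖ ≠ 0 := norm_ne_zero_iff.mpr h
        have : ‖c i • x i‖ = δ/2 := by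
          rw [norm_smul, Real.norm_eq_abs, abs_of_pos (hcpos i)]
          simp only [hc', if_neg h]
          field_simp
        rw [this]; linarith
    have hPy := bound (fun i => c i • x i) hy
    rw [scale x c, norm_smul, Real.norm_eq_abs] at hPy
    have hprod : 0 < ∏ i, c i ^ n i :=
      Finset.prod_pos (fun i _ => pow_pos (hcpos i) _)
    rw [abs_of_pos hprod] at hPy
    have key : ∀ i, c i ^ n i * ((2/δ) ^ n i * ‖x i‖ ^ n i) = 1 := by
      intro i
      rcases eq_or_ne (x i) 0 with h | h
      · have hn : n i = 0 := by
          by_contra hn; exact hx i hn h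
        simp [hn]
      · have hxn : ‖x i‖ ≠ 0 := norm_ne_zero_iff.mpr h
        have hδ0 : δ ≠ 0 := ne_of_gt hδ
        simp only [hc', if_neg h]
        rw [← mul_pow, ← mul_pow]
        have h1 : δ / 2 / ‖x i‖ * (2 / δ * ‖x i‖) = 1 := by
          field_simp
        rw [h1, one_pow]
    have hinv : (∏ i, c i ^ n i) * (∏ i, ((2/δ) ^ n i * ‖x i‖ ^ n i)) = 1 := by
      rw [← Finset.prod_mul_distrib]
      simp [key]
    have hQ : 0 ≤ ∏ i, ((2/δ) ^ n i * ‖x i‖ ^ n i) :=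
      Finset.prod_nonneg (fun i _ => by positivity)
    calc ‖P x‖
        = ((∏ i, c i ^ n i) * (∏ i, ((2/δ) ^ n i * ‖x i‖ ^ n i))) * ‖P x‖ := by
          rw [hinv, one_mul]
      _ = (∏ i, ((2/δ) ^ n i * ‖x i‖ ^ n i)) * ((∏ i, c i ^ n i) * ‖P x‖) := by
          ring
      _ ≤ (∏ i, ((2/δ) ^ n i * ‖x i‖ ^ n i)) * M :=
          mul_le_mul_of_nonneg_left hPy hQ
      _ = M * ((∏ i, ((2/δ) ^ n i)) * ∏ i, ‖x i‖ ^ n i) := by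
          rw [Finset.prod_mul_distrib, mul_comm]
      _ = M * (∏ i, ((2/δ) ^ n i)) * ∏ i, ‖x i‖ ^ n i := by
          rw [mul_assoc]
end

section
/- Let E₁, …, E_m, F be normed spaces and P an (n₁, …, n_m)-homogeneous polynomial. If P is bounded by C on the open ball of radius r centered at some point (a₁, …, a_m) of E₁ × ⋯ × E_m, then P is bounded by C · (n₁^{n₁}/n₁!) ⋯ (n_m^{n_m}/n_m!) on the open ball of radius r centered at the origin. -/
/-! In the `i`-th variable `P` is `y ↦ A (y, …, y)` for an `n`-linear `A`, and `t ↦ A (b + t • h)`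
is a polynomial of degree `n` in `t` with leading coefficient `A (h, …, h)`, so its `n`-th forward
difference is `n! • A (h, …, h)`. With `b = a - y` and `h = (2 / n) • y` the nodes `b + k • h`,
`0 ≤ k ≤ n`, stay in the ball around `a`, whence
`n! (2 / n)ⁿ ‖A (y, …, y)‖ ≤ ∑ₖ (n choose k) C = 2ⁿ C`.
Moving the centre to the origin one coordinate at a time multiplies the bound by `nᵢ^nᵢ / nᵢ!`. -/

open Finset Function fwdDiff

-- The parentheses in `(Δ_[h])^[n]` are needed: `]^` is a token of the exterior power notation.

theorem fwdDiff_iter_smul_const {M G R : Type*} [AddCommMonoid M] [AddCommGroup G] [Ring R]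
    [Module R G] (h : M) (f : M → R) (g : G) (n : ℕ) :
    (Δ_[h])^[n] (fun x ↦ f x • g) = fun x ↦ (Δ_[h])^[n] f x • g := by
  induction n with
  | zero => rfl
  | succ n ih =>
    rw [Function.iterate_succ_apply', ih, fwdDiff_smul_const, Function.iterate_succ_apply']
    rfl

namespace MultilinearMap

variable {R E F : Type*} [CommRing R] [AddCommGroup E] [Module R E] [AddCommGroup F] [Module R F]
  {n : ℕ} (A : MultilinearMap R (fun _ : Fin n ↦ E) F)

theorem apply_diag_add_smul (b h : E) (x : R) :
    A (fun _ ↦ b + x • h) =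
      ∑ s : Finset (Fin n), x ^ #s • A (s.piecewise (fun _ ↦ h) (fun _ ↦ b)) := by
  rw [add_comm, show (fun _ : Fin n ↦ x • h + b) = (fun _ ↦ x • h) + (fun _ ↦ b) from rfl,
    A.map_add_univ]
  refine sum_congr rfl fun s _ ↦ ?_
  rw [← prod_const, ← A.map_piecewise_smul]
  congr 1
  ext i
  by_cases hi : i ∈ s <;> simp [hi]

theorem factorial_smul_apply_diag (b h : E) :
    (n.factorial : R) • A (fun _ ↦ h) = ∑ k ∈ Finset.range (n + 1),
      ((-1 : ℤ) ^ (n - k) * n.choose k) • A (fun _ ↦ b + (k : R) • h) := by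
  have hdiff := fwdDiff_iter_eq_sum_shift (1 : R) (fun x ↦ A (fun _ ↦ b + x • h)) n 0
  simp only [zero_add, nsmul_eq_mul, mul_one] at hdiff
  rw [← hdiff]
  simp_rw [A.apply_diag_add_smul, ← Finset.sum_fn, fwdDiff_iter_finsetSum, Finset.sum_apply,
    fwdDiff_iter_smul_const]
  rw [Finset.sum_eq_single_of_mem univ (mem_univ _) fun s _ hs ↦ ?_]
  · simp [card_univ, fwdDiff_iter_eq_factorial]
  · rw [fwdDiff_iter_pow_eq_zero_of_lt (by simpa using (card_lt_iff_ne_univ s).2 hs),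
      Pi.zero_apply, zero_smul]

end MultilinearMap

theorem natCast_pow_mul_two_div_pow (n : ℕ) : (n : ℝ) ^ n * (2 / n) ^ n = 2 ^ n := by
  rcases Nat.eq_zero_or_pos n with rfl | hn
  · simp
  · rw [← mul_pow, mul_div_cancel₀ _ (by positivity)]

theorem abs_natCast_mul_two_div_sub_one_le {k n : ℕ} (hk : k ≤ n) :
    |(k : ℝ) * (2 / n) - 1| ≤ 1 := by
  have hkn : (k : ℝ) / n ≤ 1 := div_le_one_of_le₀ (by exact_mod_cast hk) n.cast_nonneg
  have hk0 : 0 ≤ (k : ℝ) / n := by positivity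
  rw [abs_le, mul_div_left_comm]
  constructor <;> linarith

theorem MultilinearMap.norm_apply_diag_le_of_forall_ball {E F : Type*} [NormedAddCommGroup E]
    [NormedSpace ℝ E] [NormedAddCommGroup F] [NormedSpace ℝ F] {n : ℕ}
    (A : MultilinearMap ℝ (fun _ : Fin n ↦ E) F) {a : E} {r C : ℝ}
    (hA : ∀ v ∈ Metric.ball a r, ‖A (fun _ ↦ v)‖ ≤ C) {y : E} (hy : y ∈ Metric.ball 0 r) :
    ‖A (fun _ ↦ y)‖ ≤ C * ((n : ℝ) ^ n / n.factorial) := by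
  rw [mem_ball_zero_iff] at hy
  have hnode : ∀ k ∈ Finset.range (n + 1),
      ‖A (fun _ ↦ a - y + (k : ℝ) • (2 / n : ℝ) • y)‖ ≤ C := by
    intro k hk
    refine hA _ ?_
    have hcoef := abs_natCast_mul_two_div_sub_one_le (Finset.mem_range_succ_iff.1 hk)
    have hdiff : a - y + (k : ℝ) • (2 / n : ℝ) • y - a = ((k : ℝ) * (2 / n) - 1) • y := by
      rw [smul_smul, sub_smul, one_smul]
      abel
    rw [Metric.mem_ball, dist_eq_norm, hdiff, norm_smul, Real.norm_eq_abs]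
    exact (mul_le_of_le_one_left (norm_nonneg y) hcoef).trans_lt hy
  have hfac : (n.factorial : ℝ) * (2 / n) ^ n * ‖A (fun _ ↦ y)‖ ≤ 2 ^ n * C := by
    calc (n.factorial : ℝ) * (2 / n) ^ n * ‖A (fun _ ↦ y)‖
        = ‖(n.factorial : ℝ) • A (fun _ ↦ (2 / n : ℝ) • y)‖ := by
          rw [A.map_smul_univ (fun _ ↦ (2 / n : ℝ)), smul_smul, norm_smul, prod_const, card_univ,
            Fintype.card_fin, Real.norm_eq_abs, abs_of_nonneg (by positivity)]
      _ ≤ ∑ k ∈ Finset.range (n + 1), (n.choose k : ℝ) * C := by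
          rw [A.factorial_smul_apply_diag (a - y)]
          refine (norm_sum_le _ _).trans (sum_le_sum fun k hk ↦ ?_)
          rw [← Int.cast_smul_eq_zsmul ℝ, norm_smul]
          simpa using mul_le_mul_of_nonneg_left (hnode k hk) (n.choose k).cast_nonneg
      _ = 2 ^ n * C := by
          rw [← sum_mul, ← Nat.cast_sum, Nat.sum_range_choose, Nat.cast_pow, Nat.cast_ofNat]
  refine le_of_mul_le_mul_right ?_ (by positivity : (0 : ℝ) < 2 ^ n)
  calc ‖A (fun _ ↦ y)‖ * 2 ^ n
      = (n : ℝ) ^ n / n.factorial * (n.factorial * (2 / n) ^ n * ‖A (fun _ ↦ y)‖) := by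
        rw [← natCast_pow_mul_two_div_pow]
        field_simp
    _ ≤ (n : ℝ) ^ n / n.factorial * (2 ^ n * C) := by gcongr
    _ = C * ((n : ℝ) ^ n / n.factorial) * 2 ^ n := by ring

namespace IsMultiPoly

variable {m : ℕ} {E : Fin m → Type*} [∀ i, NormedAddCommGroup (E i)] [∀ i, NormedSpace ℝ (E i)]
  {F : Type*} [NormedAddCommGroup F] [NormedSpace ℝ F] {n : Fin m → ℕ} {P : (∀ i, E i) → F}
  {r C : ℝ}

theorem norm_le_of_forall_ball_update_zero (hP : IsMultiPoly n P) {c : ∀ i, E i}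
    (hc : ∀ x ∈ Metric.ball c r, ‖P x‖ ≤ C) (j : Fin m) :
    ∀ x ∈ Metric.ball (update c j 0) r,
      ‖P x‖ ≤ C * ((n j : ℝ) ^ (n j) / (n j).factorial) := by
  intro x hx
  have hr : 0 < r := Metric.pos_of_mem_ball hx
  have hx' := (dist_pi_lt_iff hr).1 hx
  obtain ⟨A, hA⟩ := hP j x
  rw [← update_eq_self j x, hA]
  refine A.norm_apply_diag_le_of_forall_ball (a := c j) (fun v hv ↦ ?_) (by simpa using hx' j)
  rw [← hA]
  refine hc _ ((dist_pi_lt_iff hr).2 fun i ↦ ?_)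
  rcases eq_or_ne i j with rfl | hij
  · simpa using hv
  · simpa [hij] using hx' i

theorem norm_le_of_forall_ball_piecewise_zero (hP : IsMultiPoly n P) {a : ∀ i, E i}
    (ha : ∀ x ∈ Metric.ball a r, ‖P x‖ ≤ C) (S : Finset (Fin m)) :
    ∀ x ∈ Metric.ball (S.piecewise 0 a) r,
      ‖P x‖ ≤ C * ∏ i ∈ S, ((n i : ℝ) ^ (n i) / (n i).factorial) := by
  induction S using Finset.induction_on with
  | empty => simpa using ha
  | insert j S hj ih =>
    intro x hx
    rw [prod_insert hj]
    refine (hP.norm_le_of_forall_ball_update_zero ih j x ?_).trans_eq (by ring)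
    simpa [piecewise_insert] using hx

end IsMultiPoly

theorem stmt2 {m : ℕ} {E : Fin m → Type*} [∀ i, NormedAddCommGroup (E i)]
    [∀ i, NormedSpace ℝ (E i)] {F : Type*} [NormedAddCommGroup F] [NormedSpace ℝ F]
    (n : Fin m → ℕ) (P : (∀ i, E i) → F) (hP : IsMultiPoly n P)
    (a : ∀ i, E i) (r C : ℝ)
    (hbound : ∀ x ∈ Metric.ball a r, ‖P x‖ ≤ C) :
    ∀ x ∈ Metric.ball (0 : ∀ i, E i) r,
      ‖P x‖ ≤ C * ∏ i, ((n i : ℝ) ^ (n i) / (Nat.factorial (n i) : ℝ)) := by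
  intro x hx
  simpa using hP.norm_le_of_forall_ball_piecewise_zero hbound univ x (by simpa using hx)
end

section
/- Let E₁, …, E_m, F be normed spaces and let (P_j) be a sequence of (n₁, …, n_m)-homogeneous polynomials from E₁ × ⋯ × E_m to F that converges pointwise to a map P. Then P is also an (n₁, …, n_m)-homogeneous polynomial. -/
open Finset Filter

section Aux

variable {E F : Type*} [NormedAddCommGroup E] [NormedSpace ℝ E]
  [NormedAddCommGroup F] [NormedSpace ℝ F]

lemma aux1 {n : ℕ} (R : Finset (Fin n)) :
    (∑ S ∈ (Finset.univ : Finset (Fin n)).powerset,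
      (if R ⊆ S then (-1 : ℤ) ^ (n - S.card) else 0))
      = if R = Finset.univ then 1 else 0 := by
  classical
  rw [← Finset.sum_filter]
  have key : ∑ S ∈ (Finset.univ : Finset (Fin n)).powerset.filter (fun S => R ⊆ S),
      (-1 : ℤ) ^ (n - S.card) = ∑ T ∈ Rᶜ.powerset, (-1 : ℤ) ^ T.card := by
    refine Finset.sum_bij' (fun S _ => Sᶜ) (fun T _ => Tᶜ) ?_ ?_ ?_ ?_ ?_
    · intro S hS
      simp only [Finset.mem_filter] at hS
      exact Finset.mem_powerset.2 (Finset.compl_subset_compl.2 hS.2)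
    · intro T hT
      simp only [Finset.mem_filter, Finset.mem_powerset]
      refine ⟨Finset.subset_univ _, ?_⟩
      have := Finset.mem_powerset.1 hT
      calc R = Rᶜᶜ := by simp
        _ ⊆ Tᶜ := Finset.compl_subset_compl.2 this
    · intro S _; simp
    · intro T _; simp
    · intro S _
      congr 1
      rw [Finset.card_compl, Fintype.card_fin]
  rw [key, Finset.sum_powerset_neg_one_pow_card]
  congr 1
  simp [Finset.compl_eq_empty_iff]

lemma polar_eq {n : ℕ} (A : MultilinearMap ℝ (fun _ : Fin n => E) F) (v : Fin n → E) :
    ∑ S ∈ (Finset.univ : Finset (Fin n)).powerset,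
      (-1 : ℤ) ^ (n - S.card) • A (fun _ => ∑ k ∈ S, v k)
      = ∑ σ : Equiv.Perm (Fin n), A (fun i => v (σ i)) := by
  classical
  have step1 : ∀ S : Finset (Fin n),
      A (fun _ => ∑ k ∈ S, v k)
        = ∑ r ∈ Fintype.piFinset (fun _ : Fin n => S), A (fun i => v (r i)) :=
    fun S => A.map_sum_finset (fun _ j => v j) (fun _ => S)
  simp_rw [step1, Finset.smul_sum]
  have hpi : ∀ S : Finset (Fin n), Fintype.piFinset (fun _ : Fin n => S)
      = Finset.univ.filter (fun r : Fin n → Fin n => Finset.image r Finset.univ ⊆ S) := by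
    intro S; ext r; simp [Fintype.mem_piFinset, Finset.image_subset_iff]
  have step2 : ∀ S : Finset (Fin n),
      (∑ r ∈ Fintype.piFinset (fun _ : Fin n => S),
          (-1 : ℤ) ^ (n - S.card) • A (fun i => v (r i)))
        = ∑ r : Fin n → Fin n, if Finset.image r Finset.univ ⊆ S
            then (-1 : ℤ) ^ (n - S.card) • A (fun i => v (r i)) else 0 := by
    intro S
    rw [hpi S, Finset.sum_filter]
  simp_rw [step2]
  rw [Finset.sum_comm]
  have step3 : ∀ r : Fin n → Fin n,
      (∑ S ∈ (Finset.univ : Finset (Fin n)).powerset,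
          if Finset.image r Finset.univ ⊆ S
            then (-1 : ℤ) ^ (n - S.card) • A (fun i => v (r i)) else 0)
        = (if Finset.image r Finset.univ = Finset.univ then (1 : ℤ) else 0)
            • A (fun i => v (r i)) := by
    intro r
    have h : ∀ S : Finset (Fin n),
        (if Finset.image r Finset.univ ⊆ S
            then (-1 : ℤ) ^ (n - S.card) • A (fun i => v (r i)) else 0)
          = (if Finset.image r Finset.univ ⊆ S then (-1 : ℤ) ^ (n - S.card) else 0)
              • A (fun i => v (r i)) := by
      intro S; split <;> simp
    simp_rw [h, ← Finset.sum_smul, aux1]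
  simp_rw [step3, ite_smul, one_smul, zero_smul]
  rw [← Finset.sum_filter]
  refine Finset.sum_bij' (fun r hr => Equiv.ofBijective r ?_)
    (fun σ _ => ⇑σ) (fun _ _ => Finset.mem_univ _) ?_ ?_ ?_ ?_
  · simp only [Finset.mem_filter] at hr
    refine (Fintype.bijective_iff_surjective_and_card r).2 ⟨?_, rfl⟩
    intro y
    have hy : y ∈ Finset.image r Finset.univ := by rw [hr.2]; exact Finset.mem_univ _
    obtain ⟨x, _, hx⟩ := Finset.mem_image.1 hy
    exact ⟨x, hx⟩
  · intro σ _
    have him : Finset.image (⇑σ) Finset.univ = Finset.univ := by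
      ext y
      simp only [Finset.mem_image, Finset.mem_univ, iff_true]
      exact ⟨σ.symm y, trivial, σ.apply_symm_apply y⟩
    simp [him]
  · intro r hr; rfl
  · intro σ _; ext x; rfl
  · intro r hr; rfl

lemma multilinear_of_tendsto {ι : Type*} [Fintype ι] {E' : ι → Type*}
    [∀ i, NormedAddCommGroup (E' i)] [∀ i, NormedSpace ℝ (E' i)]
    (T : ℕ → MultilinearMap ℝ E' F) (g : (∀ i, E' i) → F)
    (h : ∀ v, Filter.Tendsto (fun j => T j v) Filter.atTop (nhds (g v))) :
    ∃ B : MultilinearMap ℝ E' F, ⇑B = g := by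
  refine ⟨{ toFun := g, map_update_add' := ?_, map_update_smul' := ?_ }, rfl⟩
  · intro dec m i x y
    refine tendsto_nhds_unique (h _) ?_
    have heq : (fun j => T j (Function.update m i (x + y)))
        = fun j => T j (Function.update m i x) + T j (Function.update m i y) := by
      funext j
      exact (T j).map_update_add m i x y
    rw [heq]
    exact (h _).add (h _)
  · intro dec m i c x
    refine tendsto_nhds_unique (h _) ?_
    have heq : (fun j => T j (Function.update m i (c • x)))
        = fun j => c • T j (Function.update m i x) := by
      funext j
      exact (T j).map_update_smul m i c x
    rw [heq]
    exact (h _).const_smul c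

lemma key {n : ℕ} (f : ℕ → E → F) (g : E → F)
    (hA : ∀ j, ∃ A : MultilinearMap ℝ (fun _ : Fin n => E) F, ∀ y, f j y = A (fun _ => y))
    (hlim : ∀ y, Filter.Tendsto (fun j => f j y) Filter.atTop (nhds (g y))) :
    ∃ A : MultilinearMap ℝ (fun _ : Fin n => E) F, ∀ y, g y = A (fun _ => y) := by
  classical
  choose A hAf using hA
  set T : ℕ → MultilinearMap ℝ (fun _ : Fin n => E) F :=
    fun j => ∑ σ : Equiv.Perm (Fin n), (A j).domDomCongr σ with hT
  have hTapply : ∀ j v, T j v = ∑ S ∈ (Finset.univ : Finset (Fin n)).powerset,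
      (-1 : ℤ) ^ (n - S.card) • f j (∑ k ∈ S, v k) := by
    intro j v
    rw [hT]
    rw [MultilinearMap.sum_apply]
    simp only [MultilinearMap.domDomCongr_apply]
    rw [← polar_eq]
    exact Finset.sum_congr rfl fun S _ => by rw [hAf]
  set Tg : (Fin n → E) → F := fun v => ∑ S ∈ (Finset.univ : Finset (Fin n)).powerset,
      (-1 : ℤ) ^ (n - S.card) • g (∑ k ∈ S, v k) with hTg
  have hTlim : ∀ v, Filter.Tendsto (fun j => T j v) Filter.atTop (nhds (Tg v)) := by
    intro v
    simp_rw [hTapply]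
    exact tendsto_finset_sum _ fun S _ => (hlim _).const_smul _
  obtain ⟨B, hB⟩ := multilinear_of_tendsto T Tg hTlim
  have hdiag : ∀ y, Tg (fun _ => y) = (n.factorial : ℝ) • g y := by
    intro y
    have h1 : ∀ j, T j (fun _ => y) = (n.factorial : ℝ) • f j y := by
      intro j
      rw [hT]
      rw [MultilinearMap.sum_apply]
      simp only [MultilinearMap.domDomCongr_apply]
      rw [Finset.sum_const, Finset.card_univ, Fintype.card_perm, Fintype.card_fin,
        ← hAf, Nat.cast_smul_eq_nsmul]
    refine tendsto_nhds_unique (hTlim _) ?_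
    simp_rw [h1]
    exact (hlim y).const_smul _
  refine ⟨((n.factorial : ℝ)⁻¹) • B, fun y => ?_⟩
  rw [MultilinearMap.smul_apply,
    show B (fun _ => y) = Tg (fun _ => y) from congrFun hB _, hdiag y, smul_smul,
    inv_mul_cancel₀ (by positivity), one_smul]

end Aux

theorem stmt7 {m : ℕ} {E : Fin m → Type*} [∀ i, NormedAddCommGroup (E i)]
    [∀ i, NormedSpace ℝ (E i)] {F : Type*} [NormedAddCommGroup F] [NormedSpace ℝ F]
    (n : Fin m → ℕ) (Q : ℕ → (∀ i, E i) → F) (P : (∀ i, E i) → F)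
    (hpoly : ∀ j, IsMultiPoly n (Q j))
    (hlim : ∀ x : ∀ i, E i,
      Filter.Tendsto (fun j => Q j x) Filter.atTop (nhds (P x))) :
    IsMultiPoly n P := by
  intro i x
  exact key (fun j y => Q j (Function.update x i y)) (fun y => P (Function.update x i y))
    (fun j => hpoly j i x) (fun y => hlim (Function.update x i y))
end

section
/- (Banach–Steinhaus for multipolynomials) Let E₁, …, E_m be Banach spaces, F a normed space, and (P_j) a sequence of continuous (n₁, …, n_m)-homogeneous polynomials such that (P_j(x)) converges in F for every x ∈ E₁ × ⋯ × E_m. Then the pointwise limit P(x) := lim_j P_j(x) is a continuous (n₁, …, n_m)-homogeneous polynomial. -/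
/-
Polarization: for a `ν`-linear map `A` and any base point `c`, the signed sum
`∑ ε ∈ {±1}^ν, ε₁⋯ε_ν f(c + ∑ εₖ wₖ)` of values of `f = A(v, …, v)` equals `2^ν ∑_σ A(w ∘ σ)`.
This recovers a symmetric multilinear map from finitely many values of `f`, so a pointwise limit
of homogeneous polynomials is again one, and a bound for `f` on some ball, wherever its centre,
bounds the symmetric map on a polydisc at `0`, hence `‖f v‖ ≤ K ‖v‖^ν`.

For the theorem, Baire's theorem applied to the closed sets `{x | ∀ j, ‖Q j x‖ ≤ k}` gives a ball
on which the limit `P` is bounded. Releasing one coordinate at a time turns this into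
`‖P x‖ ≤ C ∏ ‖xᵢ‖^nᵢ`, which makes `P` Lipschitz in each coordinate, locally uniformly in the
others; switching the coordinates of `z` to those of `x` one by one then gives continuity.
-/

open Finset Function Metric Filter Topology

def boolSign (R : Type*) [Ring R] (b : Bool) : R := if b then 1 else -1

theorem norm_boolSign {R : Type*} [SeminormedRing R] [NormOneClass R] (b : Bool) :
    ‖boolSign R b‖ = 1 := by
  cases b <;> simp [boolSign]

theorem prod_boolSign_update_not {R ι : Type*} [CommRing R] [Fintype ι] [DecidableEq ι]
    (ε : ι → Bool) (k : ι) :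
    ∏ t, boolSign R (update ε k (!ε k) t) = -∏ t, boolSign R (ε t) := by
  rw [← mul_prod_erase univ _ (mem_univ k),
    ← mul_prod_erase univ (fun t => boolSign R (ε t)) (mem_univ k), update_self,
    prod_congr rfl fun t ht => by rw [update_of_ne (ne_of_mem_erase ht)]]
  cases ε k <;> simp [boolSign]

section Polarization

variable {R : Type*} [CommRing R] {ι : Type*} [Fintype ι]
  {G F : Type*} [AddCommGroup G] [Module R G] [AddCommGroup F] [Module R F]

theorem exists_perm_of_forall_exists_eq_some (r : ι → Option ι)
    (hr : ∀ k, ∃ i, r i = some k) :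
    ∃ σ : Equiv.Perm ι, r = fun i => some (σ i) := by
  choose g hg using hr
  have hg_inj : Injective g := fun k k' h => Option.some_injective _ <| by rw [← hg, ← hg, h]
  let σ := Equiv.ofBijective g (Finite.injective_iff_bijective.mp hg_inj)
  refine ⟨σ.symm, funext fun i => ?_⟩
  conv_lhs => rw [← σ.apply_symm_apply i]
  exact hg _

variable [DecidableEq ι]

/- If `r` misses some `k`, flipping `ε k` negates the summand; otherwise `r` is a permutation
and every summand is `1`. -/
theorem sum_prod_boolSign_mul_prod_elim (r : ι → Option ι) :
    ∑ ε : ι → Bool, (∏ t, boolSign R (ε t)) * ∏ i, (r i).elim 1 (fun k => boolSign R (ε k)) =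
      ∑ σ : Equiv.Perm ι, if r = (fun i => some (σ i)) then (2 ^ Fintype.card ι : R) else 0 := by
  by_cases hr : ∀ k, ∃ i, r i = some k
  · obtain ⟨σ, rfl⟩ := exists_perm_of_forall_exists_eq_some r hr
    have hsq (ε : ι → Bool) : (∏ t, boolSign R (ε t)) * ∏ i, boolSign R (ε (σ i)) = 1 := by
      rw [Equiv.prod_comp σ (fun t => boolSign R (ε t)), ← prod_mul_distrib]
      exact prod_eq_one fun t _ => by cases ε t <;> simp [boolSign]
    have hσ (τ : Equiv.Perm ι) : ((fun i => some (σ i)) = fun i => some (τ i)) ↔ σ = τ := by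
      simp [funext_iff, Equiv.ext_iff]
    simp [hsq, hσ]
  · obtain ⟨k, hk⟩ : ∃ k, ∀ i, r i ≠ some k := by simpa using hr
    refine (sum_ninvolution (fun ε => update ε k (!ε k)) (fun ε => ?_) (fun ε _ => ?_)
      (fun _ => mem_univ _) (fun ε => by simp)).trans
      (sum_eq_zero fun σ _ => if_neg fun h => hk (σ.symm k) (by simp [h])).symm
    · have hfix : ∀ i, (r i).elim 1 (fun j => boolSign R (update ε k (!ε k) j)) =
          (r i).elim 1 (fun j => boolSign R (ε j)) := by
        intro i
        rcases hri : r i with _ | j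
        · rfl
        · have hj : j ≠ k := fun h => hk i (h ▸ hri)
          simp [update_of_ne hj]
      simp only [prod_boolSign_update_not, hfix]
      ring
    · exact fun h => by simpa using congrFun h k

variable (R) in
def polarize (c : G) (f : G → F) (w : ι → G) : F :=
  ∑ ε : ι → Bool, (∏ t, boolSign R (ε t)) • f (c + ∑ k, boolSign R (ε k) • w k)

def MultilinearMap.symmetrize (A : MultilinearMap R (fun _ : ι => G) F) :
    MultilinearMap R (fun _ : ι => G) F :=
  ∑ σ : Equiv.Perm ι, A.domDomCongr σ

theorem MultilinearMap.symmetrize_apply (A : MultilinearMap R (fun _ : ι => G) F) (w : ι → G) :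
    A.symmetrize w = ∑ σ : Equiv.Perm ι, A (fun i => w (σ i)) := by
  simp [symmetrize, domDomCongr]

theorem MultilinearMap.symmetrize_apply_const (A : MultilinearMap R (fun _ : ι => G) F)
    (v : G) :
    A.symmetrize (fun _ => v) = (Fintype.card ι).factorial • A (fun _ => v) := by
  simp [symmetrize_apply, Fintype.card_perm]

theorem polarize_eq_smul_symmetrize (A : MultilinearMap R (fun _ : ι => G) F) (c : G)
    (w : ι → G) :
    polarize R c (fun v => A fun _ => v) w = (2 ^ Fintype.card ι : R) • A.symmetrize w := by
  -- `none` indexes the summand `c`, `some k` the summand `w k`.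
  let v : Option ι → G := fun o => o.elim c w
  have hexpand (ε : ι → Bool) : A (fun _ => c + ∑ k, boolSign R (ε k) • w k) =
      ∑ r : ι → Option ι,
        (∏ i, (r i).elim 1 (fun k => boolSign R (ε k))) • A (fun i => v (r i)) := by
    have hsum : c + ∑ k, boolSign R (ε k) • w k =
        ∑ o : Option ι, o.elim 1 (fun k => boolSign R (ε k)) • v o := by
      simp [Fintype.sum_option, v]
    simp_rw [hsum, A.map_sum, A.map_smul_univ]
  simp only [polarize, hexpand, smul_sum, smul_smul]
  rw [sum_comm]
  simp_rw [← sum_smul, sum_prod_boolSign_mul_prod_elim]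
  simp_rw [sum_smul, ite_smul, zero_smul]
  rw [sum_comm]
  simp [A.symmetrize_apply, smul_sum, v]

end Polarization

def multilinearMapOfTendsto {α ι R N : Type*} {M : ι → Type*} [Semiring R]
    [∀ i, AddCommMonoid (M i)] [∀ i, Module R (M i)] [AddCommMonoid N] [Module R N]
    [TopologicalSpace N] [T2Space N] [ContinuousAdd N] [ContinuousConstSMul R N]
    {l : Filter α} [l.NeBot] (L : (∀ i, M i) → N) (B : α → MultilinearMap R M N)
    (h : ∀ w, Tendsto (fun a => B a w) l (𝓝 (L w))) : MultilinearMap R M N where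
  toFun := L
  map_update_add' w i x y := tendsto_nhds_unique (h _) <| by
    simpa only [MultilinearMap.map_update_add] using (h _).add (h _)
  map_update_smul' w i c x := tendsto_nhds_unique (h _) <| by
    simpa only [MultilinearMap.map_update_smul] using (h _).const_smul c

def IsHomogeneousPoly (R : Type*) [CommSemiring R] {G F : Type*} [AddCommMonoid G] [Module R G]
    [AddCommMonoid F] [Module R F] (ν : ℕ) (f : G → F) : Prop :=
  ∃ A : MultilinearMap R (fun _ : Fin ν => G) F, ∀ v, f v = A fun _ => v

theorem IsHomogeneousPoly.of_tendsto {R G F α : Type*} [Field R] [CharZero R] [AddCommGroup G]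
    [Module R G] [AddCommGroup F] [Module R F] [TopologicalSpace F] [T2Space F] [ContinuousAdd F]
    [ContinuousConstSMul R F] {l : Filter α} [l.NeBot] {ν : ℕ} {f : α → G → F} {g : G → F}
    (hf : ∀ a, IsHomogeneousPoly R ν (f a)) (hg : ∀ v, Tendsto (fun a => f a v) l (𝓝 (g v))) :
    IsHomogeneousPoly R ν g := by
  choose A hA using hf
  let B a : MultilinearMap R (fun _ : Fin ν => G) F := (ν.factorial : R)⁻¹ • (A a).symmetrize
  have hB_const (a) (v : G) : B a (fun _ => v) = f a v := by
    simp [B, (A a).symmetrize_apply_const, hA, ← Nat.cast_smul_eq_nsmul R, smul_smul,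
      Nat.factorial_ne_zero]
  have hB_polarize (a) (w : Fin ν → G) :
      B a w = ((2 ^ ν * ν.factorial : ℕ) : R)⁻¹ • polarize R 0 (f a) w := by
    rw [show f a = fun v => A a fun _ => v from funext (hA a), polarize_eq_smul_symmetrize,
      smul_smul, Fintype.card_fin]
    simp [B, mul_comm]
  have htend (w : Fin ν → G) : Tendsto (fun a => B a w) l
      (𝓝 (((2 ^ ν * ν.factorial : ℕ) : R)⁻¹ • polarize R 0 g w)) := by
    simp only [hB_polarize]
    exact (tendsto_finsetSum _ fun ε _ => (hg _).const_smul _).const_smul _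
  exact ⟨multilinearMapOfTendsto _ B htend, fun v =>
    tendsto_nhds_unique (by simpa only [hB_const] using hg v) (htend _)⟩

section Normed

variable {ι : Type*} [Fintype ι] [DecidableEq ι] {G F : Type*} [NormedAddCommGroup G]
  [NormedSpace ℝ G] [NormedAddCommGroup F] [NormedSpace ℝ F]

theorem norm_polarize_le {f : G → F} {c : G} {w : ι → G} {M : ℝ}
    (hM : ∀ u, ‖u‖ ≤ ∑ k, ‖w k‖ → ‖f (c + u)‖ ≤ M) :
    ‖polarize ℝ c f w‖ ≤ 2 ^ Fintype.card ι * M := by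
  have hterm (ε : ι → Bool) :
      ‖(∏ t, boolSign ℝ (ε t)) • f (c + ∑ k, boolSign ℝ (ε k) • w k)‖ ≤ M := by
    rw [norm_smul, norm_prod, prod_eq_one fun t _ => norm_boolSign (ε t), one_mul]
    refine hM _ ((norm_sum_le _ _).trans (sum_le_sum fun k _ => ?_))
    rw [norm_smul, norm_boolSign, one_mul]
  calc ‖polarize ℝ c f w‖ ≤ ∑ _ε : ι → Bool, M :=
        (norm_sum_le _ _).trans (sum_le_sum fun ε _ => hterm ε)
    _ = 2 ^ Fintype.card ι * M := by simp

variable {ν : ℕ} {f : G → F}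

theorem IsHomogeneousPoly.exists_bound_of_norm_le (hf : IsHomogeneousPoly ℝ ν f) {c : G}
    {r M : ℝ} (hr : 0 < r) (hM : ∀ u, ‖u‖ ≤ r → ‖f (c + u)‖ ≤ M) :
    ∃ A : MultilinearMap ℝ (fun _ : Fin ν => G) F, (∀ v, f v = A fun _ => v) ∧
      ∀ w, ‖A w‖ ≤ M * (2 * (ν + 1) / r) ^ ν * ∏ k, ‖w k‖ := by
  obtain ⟨A, hA⟩ := hf
  have hM₀ : 0 ≤ M := (norm_nonneg _).trans (hM 0 (by simp [hr.le]))
  have hρ : 0 < r / (ν + 1) := by positivity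
  refine ⟨(ν.factorial : ℝ)⁻¹ • A.symmetrize, fun v => ?_, fun w => ?_⟩
  · simp [A.symmetrize_apply_const, hA, ← Nat.cast_smul_eq_nsmul ℝ, smul_smul,
      Nat.factorial_ne_zero]
  -- On the polydisc of radius `r / (ν + 1)`, polarizing at `c` samples `f` only on
  -- `closedBall c r`.
  refine MultilinearMap.bound_of_shell _ (fun _ => hρ) (c := fun _ => (2 : ℝ))
    (fun _ => by norm_num) (fun w hw_ge hw_lt => ?_) w
  have hw_sum : ∑ k, ‖w k‖ ≤ r := by
    calc ∑ k, ‖w k‖ ≤ ∑ _k : Fin ν, r / (ν + 1) := sum_le_sum fun k _ => (hw_lt k).le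
      _ ≤ r := by
        rw [sum_const, card_univ, Fintype.card_fin, nsmul_eq_mul, ← mul_div_assoc,
          div_le_iff₀ (by positivity)]
        nlinarith
  have hsym : ‖A.symmetrize w‖ ≤ M := by
    have hpol := norm_polarize_le (f := f) (c := c) (w := w)
      fun u hu => hM u (hu.trans hw_sum)
    rw [show f = fun v => A fun _ => v from funext hA, polarize_eq_smul_symmetrize, norm_smul,
      Fintype.card_fin, norm_pow, Real.norm_two] at hpol
    exact le_of_mul_le_mul_left hpol (by positivity)
  have hprod : 1 ≤ (2 * (ν + 1) / r) ^ ν * ∏ k, ‖w k‖ := by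
    rw [show (2 * (ν + 1) / r) ^ ν = ∏ _k : Fin ν, 2 * (ν + 1) / r by simp [div_pow],
      ← prod_mul_distrib]
    refine one_le_prod fun k _ => ?_
    have := hw_ge k
    rw [Real.norm_two, div_div, div_le_iff₀ (by positivity)] at this
    rw [div_mul_eq_mul_div, le_div_iff₀ hr]
    linarith
  have hfact : (ν.factorial : ℝ)⁻¹ ≤ 1 :=
    inv_le_one_of_one_le₀ (by exact_mod_cast ν.factorial_pos)
  calc ‖((ν.factorial : ℝ)⁻¹ • A.symmetrize) w‖
        = (ν.factorial : ℝ)⁻¹ * ‖A.symmetrize w‖ := by simp [norm_smul]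
    _ ≤ 1 * M := by gcongr
    _ ≤ M * ((2 * (ν + 1) / r) ^ ν * ∏ k, ‖w k‖) := by nlinarith
    _ = _ := by ring

theorem IsHomogeneousPoly.norm_le_mul_norm_pow (hf : IsHomogeneousPoly ℝ ν f) {c : G}
    {r M : ℝ} (hr : 0 < r) (hM : ∀ u, ‖u‖ ≤ r → ‖f (c + u)‖ ≤ M) (v : G) :
    ‖f v‖ ≤ M * (2 * (ν + 1) / r) ^ ν * ‖v‖ ^ ν := by
  obtain ⟨A, hA, hbound⟩ := hf.exists_bound_of_norm_le hr hM
  simpa [hA] using hbound fun _ => v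

theorem IsHomogeneousPoly.norm_sub_le (hf : IsHomogeneousPoly ℝ ν f) {K : ℝ} (hK₀ : 0 ≤ K)
    (hK : ∀ v, ‖f v‖ ≤ K * ‖v‖ ^ ν) (a b : G) :
    ‖f a - f b‖ ≤ K * (2 * (ν + 1)) ^ ν * ν * max ‖a‖ ‖b‖ ^ (ν - 1) * ‖a - b‖ := by
  obtain ⟨A, hA, hbound⟩ := hf.exists_bound_of_norm_le (c := 0) one_pos fun u hu => by
    simpa using (hK u).trans (mul_le_of_le_one_right hK₀ (pow_le_one₀ (norm_nonneg u) hu))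
  rw [div_one] at hbound
  rw [hA, hA]
  refine (A.norm_image_sub_le_of_bound (by positivity) hbound _ _).trans ?_
  rw [Fintype.card_fin]
  gcongr
  · exact pi_norm_const_le a
  · exact pi_norm_const_le b
  · exact pi_norm_const_le (a - b)

end Normed

theorem exists_isOpen_forall_norm_le_of_tendsto {X F : Type*} [TopologicalSpace X]
    [BaireSpace X] [Nonempty X] [SeminormedAddCommGroup F] {Q : ℕ → X → F} {P : X → F}
    (hQ : ∀ j, Continuous (Q j))
    (hlim : ∀ x, Tendsto (fun j => Q j x) atTop (𝓝 (P x))) :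
    ∃ U : Set X, IsOpen U ∧ U.Nonempty ∧ ∃ M : ℝ, ∀ x ∈ U, ‖P x‖ ≤ M := by
  let S (k : ℕ) : Set X := {x | ∀ j, ‖Q j x‖ ≤ k}
  have hS_closed (k : ℕ) : IsClosed (S k) := by
    simp only [S, Set.ofPred_forall]
    exact isClosed_iInter fun j => isClosed_le (hQ j).norm continuous_const
  have hS_cover : ⋃ k, S k = Set.univ := by
    refine Set.eq_univ_of_forall fun x => ?_
    obtain ⟨M, hM⟩ := (hlim x).norm.bddAbove_range
    exact Set.mem_iUnion.mpr ⟨⌈M⌉₊, fun j => (hM ⟨j, rfl⟩).trans (Nat.le_ceil M)⟩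
  obtain ⟨k, hk⟩ := nonempty_interior_of_iUnion_of_closed hS_closed hS_cover
  refine ⟨interior (S k), isOpen_interior, hk, k, fun x hx => ?_⟩
  exact le_of_tendsto (hlim x).norm (Eventually.of_forall (interior_subset hx))

theorem prod_norm_update_pow {ι : Type*} [Fintype ι] [DecidableEq ι] {E : ι → Type*}
    [∀ i, Norm (E i)] (n : ι → ℕ) (x : ∀ i, E i) (a : ι) (v : E a) :
    ∏ i, ‖update x a v i‖ ^ n i = ‖v‖ ^ n a * ∏ i ∈ univ.erase a, ‖x i‖ ^ n i := by
  rw [← mul_prod_erase univ _ (mem_univ a), update_self,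
    prod_congr rfl fun i hi => by rw [update_of_ne (ne_of_mem_erase hi)]]

section MultiPoly

variable {m : ℕ} {E : Fin m → Type*} [∀ i, NormedAddCommGroup (E i)]
  [∀ i, NormedSpace ℝ (E i)] {F : Type*} [NormedAddCommGroup F] [NormedSpace ℝ F]
  {n : Fin m → ℕ} {P : (∀ i, E i) → F}

theorem IsMultiPoly.isHomogeneousPoly (hP : IsMultiPoly n P) (i : Fin m) (x : ∀ i, E i) :
    IsHomogeneousPoly ℝ (n i) fun y => P (update x i y) :=
  hP i x

theorem IsMultiPoly.exists_norm_le_prod (hP : IsMultiPoly n P) {x₀ : ∀ i, E i} {r M : ℝ}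
    (hr : 0 < r) (hM : ∀ y ∈ closedBall x₀ r, ‖P y‖ ≤ M) :
    ∃ C, 0 ≤ C ∧ ∀ x, ‖P x‖ ≤ C * ∏ i, ‖x i‖ ^ n i := by
  have key (S : Finset (Fin m)) : ∃ C, 0 ≤ C ∧ ∀ x : ∀ i, E i,
      (∀ i ∉ S, x i ∈ closedBall (x₀ i) r) → ‖P x‖ ≤ C * ∏ i ∈ S, ‖x i‖ ^ n i := by
    induction S using Finset.induction_on with
    | empty =>
      refine ⟨M, (norm_nonneg _).trans (hM x₀ (mem_closedBall_self hr.le)), fun x hx => ?_⟩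
      simpa using hM x (by simpa [closedBall_pi _ hr.le] using hx)
    | insert a S ha ih =>
      obtain ⟨C, hC, hCS⟩ := ih
      refine ⟨C * (2 * (n a + 1) / r) ^ n a, by positivity, fun x hx => ?_⟩
      have hsec : ∀ u, ‖u‖ ≤ r →
          ‖P (update x a (x₀ a + u))‖ ≤ C * ∏ i ∈ S, ‖x i‖ ^ n i := by
        intro u hu
        have hprod : ∏ i ∈ S, ‖update x a (x₀ a + u) i‖ ^ n i = ∏ i ∈ S, ‖x i‖ ^ n i :=
          prod_congr rfl fun i hi => by rw [update_of_ne (ne_of_mem_of_not_mem hi ha)]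
        refine hprod ▸ hCS _ fun i hi => ?_
        rcases eq_or_ne i a with rfl | hia
        · simpa using hu
        · simpa [update_of_ne hia] using hx i (by simp [hia, hi])
      have := (hP.isHomogeneousPoly a x).norm_le_mul_norm_pow hr hsec (x a)
      rw [update_eq_self] at this
      rw [prod_insert ha]
      linarith
  obtain ⟨C, hC, hCx⟩ := key univ
  exact ⟨C, hC, fun x => hCx x (by simp)⟩

theorem IsMultiPoly.norm_sub_update_le (hP : IsMultiPoly n P) {C : ℝ} (hC : 0 ≤ C)
    (hbound : ∀ x, ‖P x‖ ≤ C * ∏ i, ‖x i‖ ^ n i) (y : ∀ i, E i) (a : Fin m) (u v : E a) :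
    ‖P (update y a u) - P (update y a v)‖ ≤
      C * (∏ i ∈ univ.erase a, ‖y i‖ ^ n i) * (2 * (n a + 1)) ^ n a * n a *
        max ‖u‖ ‖v‖ ^ (n a - 1) * ‖u - v‖ :=
  (hP.isHomogeneousPoly a y).norm_sub_le (by positivity)
    (fun w => (hbound _).trans_eq (by rw [prod_norm_update_pow]; ring)) u v

theorem IsMultiPoly.continuous_of_norm_le_prod (hP : IsMultiPoly n P) {C : ℝ} (hC : 0 ≤ C)
    (hbound : ∀ x, ‖P x‖ ≤ C * ∏ i, ‖x i‖ ^ n i) : Continuous P := by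
  refine continuous_iff_continuousAt.2 fun z => ?_
  suffices ∀ S : Finset (Fin m), Tendsto (fun x => P (S.piecewise x z)) (𝓝 z) (𝓝 (P z)) by
    simpa [ContinuousAt] using this univ
  intro S
  induction S using Finset.induction_on with
  | empty => simp
  | insert a S ha ih =>
    have hpiece : Continuous fun x : ∀ i, E i => S.piecewise x z := continuous_pi fun i => by
      by_cases hi : i ∈ S <;> simp [hi, continuous_apply, continuous_const]
    let g (x : ∀ i, E i) : ℝ := C * (∏ i ∈ univ.erase a, ‖S.piecewise x z i‖ ^ n i) *
      (2 * (n a + 1)) ^ n a * n a * max ‖x a‖ ‖z a‖ ^ (n a - 1) * ‖x a - z a‖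
    have hg : Tendsto g (𝓝 z) (𝓝 0) := by
      have : Continuous g := by fun_prop
      simpa [g] using this.tendsto z
    have hstep : Tendsto (fun x => P ((insert a S).piecewise x z) - P (S.piecewise x z))
        (𝓝 z) (𝓝 0) := by
      refine squeeze_zero_norm (fun x => ?_) hg
      have := hP.norm_sub_update_le hC hbound (S.piecewise x z) a (x a) (z a)
      rwa [← S.piecewise_insert,
        update_eq_self_iff.mpr (piecewise_eq_of_notMem _ _ _ ha).symm] at this
    simpa using ih.add hstep

end MultiPoly

/-- Banach–Steinhaus for multipolynomials. -/
theorem stmt9 {m : ℕ} {E : Fin m → Type*} [∀ i, NormedAddCommGroup (E i)]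
    [∀ i, NormedSpace ℝ (E i)] [∀ i, CompleteSpace (E i)]
    {F : Type*} [NormedAddCommGroup F] [NormedSpace ℝ F]
    (n : Fin m → ℕ) (Q : ℕ → (∀ i, E i) → F) (P : (∀ i, E i) → F)
    (hpoly : ∀ j, IsMultiPoly n (Q j)) (hcont : ∀ j, Continuous (Q j))
    (hlim : ∀ x : ∀ i, E i,
      Filter.Tendsto (fun j => Q j x) Filter.atTop (nhds (P x))) :
    IsMultiPoly n P ∧ Continuous P := by
  have hP : IsMultiPoly n P := fun i x =>
    IsHomogeneousPoly.of_tendsto (fun j => hpoly j i x) fun y => hlim (update x i y)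
  obtain ⟨U, hU, ⟨x₀, hx₀⟩, M, hM⟩ := exists_isOpen_forall_norm_le_of_tendsto hcont hlim
  obtain ⟨r, hr, hball⟩ := nhds_basis_closedBall.mem_iff.1 (hU.mem_nhds hx₀)
  obtain ⟨C, hC, hbound⟩ := hP.exists_norm_le_prod hr fun y hy => hM y (hball hy)
  exact ⟨hP, hP.continuous_of_norm_le_prod hC hbound⟩
end

section
/- Let A be a symmetric m-linear map from E^m to F (E, F normed spaces) with associated m-homogeneous polynomial Â(x) = A(x,…,x). Then ‖Â‖ ≤ ‖A‖ ≤ (m^m/m!)·‖Â‖, where ‖A‖ = sup{‖A(x₁,…,x_m)‖ : ‖x_i‖ ≤ 1} and ‖Â‖ = sup{‖Â(x)‖ : ‖x‖ ≤ 1}. -/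
open scoped ENNReal

open Finset

namespace Polar11

noncomputable def sgn (b : Bool) : ℝ := if b then 1 else -1

lemma abs_sgn (b : Bool) : |sgn b| = 1 := by cases b <;> simp [sgn]

variable {m : ℕ}

lemma prod_sgn_comp (f : Fin m → Fin m) (ε : Fin m → Bool) :
    (∏ j, sgn (ε (f j))) = ∏ i, sgn (ε i) ^ #{j | f j = i} := by
  rw [Finset.prod_comp (fun i => sgn (ε i)) f]
  refine Finset.prod_subset (Finset.subset_univ _) ?_
  intro b _ hb
  have : #{a | f a = b} = 0 := by
    rw [Finset.card_eq_zero, Finset.filter_eq_empty_iff]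
    intro j _
    exact fun h => hb (Finset.mem_image.2 ⟨j, Finset.mem_univ j, h⟩)
  simp [this]

lemma key (f : Fin m → Fin m) :
    ∑ ε : Fin m → Bool, ((∏ j, sgn (ε j)) * ∏ j, sgn (ε (f j)))
      = if Function.Bijective f then (2:ℝ)^m else 0 := by
  have h1 : ∀ ε : Fin m → Bool, (∏ j, sgn (ε j)) * ∏ j, sgn (ε (f j))
      = ∏ i, sgn (ε i) ^ (1 + #{j | f j = i}) := by
    intro ε
    rw [show (∏ j, sgn (ε (f j))) = ∏ i, sgn (ε i) ^ #{j | f j = i} from prod_sgn_comp f ε,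
      ← Finset.prod_mul_distrib]
    exact Finset.prod_congr rfl fun i _ => by rw [pow_add, pow_one]
  simp_rw [h1]
  rw [← Fintype.prod_sum (fun i (b : Bool) => sgn b ^ (1 + #{j | f j = i}))]
  have h2 : ∀ i : Fin m, ∑ b : Bool, sgn b ^ (1 + #{j | f j = i})
      = if Odd (#{j | f j = i}) then (2:ℝ) else 0 := by
    intro i
    set c := #{j | f j = i} with hc
    have ht : sgn true = 1 := rfl
    have hh : sgn false = -1 := rfl
    rw [Fintype.sum_bool, ht, hh, one_pow]
    rcases Nat.even_or_odd c with h | h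
    · have h1c : Odd (1 + c) := by rw [add_comm]; exact h.add_one
      rw [h1c.neg_one_pow, if_neg (by simp [Nat.not_odd_iff_even, h])]; ring
    · have h1c : Even (1 + c) := by rw [add_comm]; exact h.add_one
      rw [h1c.neg_one_pow, if_pos h]; ring
  rw [Finset.prod_congr rfl fun i _ => h2 i]
  by_cases hf : Function.Bijective f
  · rw [if_pos hf]
    have hcard : ∀ i : Fin m, #{j | f j = i} = 1 := by
      intro i
      have : ({j | f j = i} : Finset (Fin m)) = {(Equiv.ofBijective f hf).symm i} := by
        ext j
        simp only [Finset.mem_filter, Finset.mem_univ, true_and, Finset.mem_singleton,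
          Equiv.eq_symm_apply, Equiv.ofBijective_apply]
      rw [this, Finset.card_singleton]
    simp [hcard]
  · rw [if_neg hf]
    have hsurj : ¬ Function.Surjective f := fun h => hf (Finite.surjective_iff_bijective.mp h)
    simp only [Function.Surjective, not_forall, not_exists] at hsurj
    obtain ⟨i, hi⟩ := hsurj
    refine Finset.prod_eq_zero (Finset.mem_univ i) ?_
    have : #{j | f j = i} = 0 := by
      rw [Finset.card_eq_zero, Finset.filter_eq_empty_iff]
      exact fun j _ => hi j
    simp [this]

end Polar11

namespace Polar11

variable {E : Type*} [NormedAddCommGroup E] [NormedSpace ℝ E]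
  {F : Type*} [NormedAddCommGroup F] [NormedSpace ℝ F]

lemma polar {m : ℕ} (A : MultilinearMap ℝ (fun _ : Fin m => E) F)
    (hsym : ∀ (σ : Equiv.Perm (Fin m)) (x : Fin m → E), A (x ∘ σ) = A x) (x : Fin m → E) :
    ∑ ε : Fin m → Bool, (∏ j, sgn (ε j)) • A (fun _ => ∑ i, sgn (ε i) • x i)
      = ((2^m * m.factorial : ℕ) : ℝ) • A x := by
  classical
  have expand : ∀ ε : Fin m → Bool, A (fun _ : Fin m => ∑ i, sgn (ε i) • x i)
      = ∑ f : Fin m → Fin m, (∏ j, sgn (ε (f j))) • A (x ∘ f) := by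
    intro ε
    rw [A.map_sum (fun _ j => sgn (ε j) • x j)]
    exact Finset.sum_congr rfl fun f _ => A.map_smul_univ (fun j => sgn (ε (f j))) (x ∘ f)
  calc ∑ ε : Fin m → Bool, (∏ j, sgn (ε j)) • A (fun _ => ∑ i, sgn (ε i) • x i)
      = ∑ ε : Fin m → Bool, ∑ f : Fin m → Fin m,
          ((∏ j, sgn (ε j)) * ∏ j, sgn (ε (f j))) • A (x ∘ f) := by
        refine Finset.sum_congr rfl fun ε _ => ?_
        rw [expand ε, Finset.smul_sum]
        exact Finset.sum_congr rfl fun f _ => smul_smul _ _ _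
    _ = ∑ f : Fin m → Fin m, (∑ ε : Fin m → Bool,
          ((∏ j, sgn (ε j)) * ∏ j, sgn (ε (f j)))) • A (x ∘ f) := by
        rw [Finset.sum_comm]
        exact Finset.sum_congr rfl fun f _ => (Finset.sum_smul).symm
    _ = ∑ f : Fin m → Fin m, if Function.Bijective f then ((2:ℝ)^m) • A x else 0 := by
        refine Finset.sum_congr rfl fun f _ => ?_
        rw [key f]
        by_cases hf : Function.Bijective f
        · rw [if_pos hf, if_pos hf]
          congr 1
          exact hsym (Equiv.ofBijective f hf) x
        · rw [if_neg hf, if_neg hf, zero_smul]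
    _ = ((2^m * m.factorial : ℕ) : ℝ) • A x := by
        rw [Finset.sum_ite, Finset.sum_const, Finset.sum_const_zero, add_zero]
        have e : {f : Fin m → Fin m // Function.Bijective f} ≃ Equiv.Perm (Fin m) :=
          { toFun := fun f => Equiv.ofBijective f.1 f.2
            invFun := fun σ => ⟨σ, σ.bijective⟩
            left_inv := fun f => Subtype.ext rfl
            right_inv := fun σ => Equiv.ext fun a => rfl }
        have hcard : #({f : Fin m → Fin m | Function.Bijective f} : Finset _) = m.factorial := by
          rw [← Fintype.card_subtype, Fintype.card_congr e, Fintype.card_perm, Fintype.card_fin]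
        rw [hcard, ← Nat.cast_smul_eq_nsmul ℝ, smul_smul]
        congr 1
        push_cast
        ring

end Polar11

/-- For a symmetric m-linear map `A` with associated polynomial `Â x = A (x,…,x)`,
`‖Â‖ ≤ ‖A‖ ≤ (m^m/m!)‖Â‖`, with the sup norms taken in `[0,∞]`. -/
theorem stmt11 {m : ℕ} {E : Type*} [NormedAddCommGroup E] [NormedSpace ℝ E]
    {F : Type*} [NormedAddCommGroup F] [NormedSpace ℝ F]
    (A : MultilinearMap ℝ (fun _ : Fin m => E) F)
    (hsym : ∀ (σ : Equiv.Perm (Fin m)) (x : Fin m → E), A (x ∘ σ) = A x) :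
    (⨆ (x : E) (_ : ‖x‖ ≤ 1), (‖A (fun _ => x)‖₊ : ℝ≥0∞))
      ≤ (⨆ (x : Fin m → E) (_ : ∀ i, ‖x i‖ ≤ 1), (‖A x‖₊ : ℝ≥0∞)) ∧
    (⨆ (x : Fin m → E) (_ : ∀ i, ‖x i‖ ≤ 1), (‖A x‖₊ : ℝ≥0∞))
      ≤ ((m : ℝ≥0∞) ^ m / (Nat.factorial m : ℝ≥0∞))
        * (⨆ (x : E) (_ : ‖x‖ ≤ 1), (‖A (fun _ => x)‖₊ : ℝ≥0∞)) := by
  classical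
  set S := ⨆ (x : E) (_ : ‖x‖ ≤ 1), (‖A (fun _ => x)‖₊ : ℝ≥0∞) with hS
  constructor
  · exact iSup₂_le fun x hx => le_iSup₂_of_le (fun _ => x) (fun _ => hx) le_rfl
  by_cases hm : m = 0
  · subst hm
    rw [pow_zero, Nat.factorial_zero, Nat.cast_one]
    rw [show (1:ℝ≥0∞) / 1 * S = S by simp]
    refine iSup₂_le fun x _ => ?_
    have hx0 : x = fun _ => (0 : E) := Subsingleton.elim _ _
    rw [hx0]
    exact le_iSup₂_of_le (0 : E) (by simp) le_rfl
  -- m > 0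
  have hm0 : (m : ℝ) ≠ 0 := Nat.cast_ne_zero.mpr hm
  have homog : ∀ y : E, ‖y‖ ≤ m → (‖A (fun _ => y)‖₊ : ℝ≥0∞) ≤ (m : ℝ≥0∞) ^ m * S := by
    intro y hy
    set z := (m : ℝ)⁻¹ • y with hzdef
    have hz : ‖z‖ ≤ 1 := by
      rw [hzdef, norm_smul, norm_inv, Real.norm_natCast]
      rw [inv_mul_le_iff₀ (by positivity), mul_one]
      exact hy
    have hyz : (fun _ : Fin m => y) = fun _ : Fin m => (m : ℝ) • z := by
      funext i; rw [hzdef, smul_inv_smul₀ hm0]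
    have hA : A (fun _ => y) = ((m : ℝ) ^ m) • A (fun _ => z) := by
      rw [hyz]
      have := A.map_smul_univ (fun _ : Fin m => (m : ℝ)) (fun _ => z)
      simpa [Finset.prod_const, Finset.card_univ] using this
    rw [hA, nnnorm_smul]
    have hcoe : ((‖(m : ℝ) ^ m‖₊ :  NNReal) : ℝ≥0∞) = (m : ℝ≥0∞) ^ m := by
      rw [nnnorm_pow, Real.nnnorm_natCast]
      push_cast
      ring
    rw [ENNReal.coe_mul, hcoe]
    have hzS : (‖A (fun _ => z)‖₊ : ℝ≥0∞) ≤ S := by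
      rw [hS]; exact le_iSup₂_of_le z hz le_rfl
    exact mul_le_mul_right hzS _
  refine iSup₂_le fun x hx => ?_
  have key2 : ((2:ℝ≥0∞)^m * (m.factorial : ℝ≥0∞)) * ‖A x‖₊
      ≤ (2:ℝ≥0∞)^m * ((m : ℝ≥0∞) ^ m * S) := by
    have hpol := Polar11.polar A hsym x
    have hL : ((2^m * m.factorial : ℕ) : ℝ≥0∞) * ‖A x‖₊
        = (‖((2^m * m.factorial : ℕ) : ℝ) • A x‖₊ : ℝ≥0∞) := by
      rw [nnnorm_smul, ENNReal.coe_mul, Real.nnnorm_natCast, ENNReal.coe_natCast]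
    have hcast : ((2^m * m.factorial : ℕ) : ℝ≥0∞) = (2:ℝ≥0∞)^m * (m.factorial : ℝ≥0∞) := by
      push_cast; ring
    rw [← hcast, hL, ← hpol]
    calc (‖∑ ε : Fin m → Bool, (∏ j, Polar11.sgn (ε j)) • A (fun _ => ∑ i, Polar11.sgn (ε i) • x i)‖₊ : ℝ≥0∞)
        ≤ ∑ ε : Fin m → Bool,
            (‖(∏ j, Polar11.sgn (ε j)) • A (fun _ => ∑ i, Polar11.sgn (ε i) • x i)‖₊ : ℝ≥0∞) := by
          rw [← ENNReal.coe_finset_sum]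
          exact_mod_cast nnnorm_sum_le _ _
      _ ≤ ∑ _ε : Fin m → Bool, (m : ℝ≥0∞) ^ m * S := by
          refine Finset.sum_le_sum fun ε _ => ?_
          have habs : ‖(∏ j, Polar11.sgn (ε j))‖₊ = 1 := by
            have : |∏ j, Polar11.sgn (ε j)| = 1 := by
              rw [Finset.abs_prod]
              simp [Polar11.abs_sgn]
            simpa [← NNReal.coe_inj, Real.norm_eq_abs] using congrArg Real.toNNReal this
          rw [nnnorm_smul, habs, one_mul]
          refine homog _ ?_
          calc ‖∑ i, Polar11.sgn (ε i) • x i‖ ≤ ∑ i, ‖Polar11.sgn (ε i) • x i‖ :=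
                norm_sum_le _ _
            _ ≤ ∑ _i : Fin m, (1:ℝ) := by
                refine Finset.sum_le_sum fun i _ => ?_
                rw [norm_smul, Real.norm_eq_abs, Polar11.abs_sgn, one_mul]
                exact hx i
            _ = m := by simp
      _ = (2:ℝ≥0∞)^m * ((m : ℝ≥0∞) ^ m * S) := by
          rw [Finset.sum_const, Finset.card_univ]
          simp only [nsmul_eq_mul]
          rw [Fintype.card_fun, Fintype.card_bool, Fintype.card_fin]
          push_cast
          ring
  have h2 : (2:ℝ≥0∞)^m ≠ 0 := by positivity
  have h2t : (2:ℝ≥0∞)^m ≠ ⊤ := by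
    exact ENNReal.pow_ne_top (by norm_num)
  rw [mul_assoc] at key2
  have key3 : (m.factorial : ℝ≥0∞) * ‖A x‖₊ ≤ (m : ℝ≥0∞) ^ m * S :=
    (ENNReal.mul_le_mul_iff_right h2 h2t).mp key2
  have hf0 : (m.factorial : ℝ≥0∞) ≠ 0 := by
    exact_mod_cast Nat.factorial_ne_zero m
  have hft : (m.factorial : ℝ≥0∞) ≠ ⊤ := ENNReal.natCast_ne_top _
  rw [div_eq_mul_inv, mul_right_comm, ← div_eq_mul_inv]
  rw [ENNReal.le_div_iff_mul_le (Or.inl hf0) (Or.inl hft)]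
  rw [mul_comm]
  exact key3
end

section
/- The class of compact multipolynomials satisfies the ideal property: if P : E₁ × ⋯ × E_m → F is a continuous (n₁,…,n_m)-homogeneous polynomial such that P(B_{E₁} × ⋯ × B_{E_m}) is relatively compact, u_j : G_j → E_j are continuous linear operators (j = 1,…,m), and t : F → H is a continuous linear operator, then t ∘ P ∘ (u₁,…,u_m) : G₁ × ⋯ × G_m → H is a continuous (n₁,…,n_m)-homogeneous polynomial whose image of the product of closed unit balls is relatively compact. -/
lemma IsMultiPoly.scale_single {m : ℕ} {E : Fin m → Type*} [∀ i, NormedAddCommGroup (E i)]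
    [∀ i, NormedSpace ℝ (E i)] {F : Type*} [NormedAddCommGroup F] [NormedSpace ℝ F]
    {n : Fin m → ℕ} {P : (∀ i, E i) → F} (hP : IsMultiPoly n P)
    (x : ∀ i, E i) (i : Fin m) (c : ℝ) :
    P (Function.update x i (c • x i)) = c ^ n i • P x := by
  obtain ⟨A, hA⟩ := hP i x
  have h1 := hA (c • x i)
  have h2 := hA (x i)
  rw [Function.update_eq_self] at h2
  rw [h1, h2]
  have h3 := A.map_smul_univ (fun _ : Fin (n i) => c) (fun _ : Fin (n i) => x i)
  simp only [Finset.prod_const, Finset.card_univ, Fintype.card_fin] at h3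
  exact h3

lemma IsMultiPoly.scale_all {m : ℕ} {E : Fin m → Type*} [∀ i, NormedAddCommGroup (E i)]
    [∀ i, NormedSpace ℝ (E i)] {F : Type*} [NormedAddCommGroup F] [NormedSpace ℝ F]
    {n : Fin m → ℕ} {P : (∀ i, E i) → F} (hP : IsMultiPoly n P)
    (x : ∀ i, E i) (c : Fin m → ℝ) :
    P (fun i => c i • x i) = (∏ i, c i ^ n i) • P x := by
  have key : ∀ s : Finset (Fin m),
      P (fun i => if i ∈ s then c i • x i else x i) = (∏ i ∈ s, c i ^ n i) • P x := by
    intro s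
    induction s using Finset.induction with
    | empty => simp
    | @insert a s ha ih =>
      set g : ∀ i, E i := fun i => if i ∈ s then c i • x i else x i with hg
      have hga : g a = x a := by simp [hg, ha]
      have heq : (fun i => if i ∈ insert a s then c i • x i else x i)
          = Function.update g a (c a • g a) := by
        funext j
        rcases eq_or_ne j a with rfl | hj
        · simp [hga]
        · simp [Function.update_of_ne hj, hg, Finset.mem_insert, hj]
      rw [heq, hP.scale_single g a, ih, Finset.prod_insert ha, smul_smul]
  have := key Finset.univ
  simpa using this

/-- Ideal property of compact multipolynomials. -/
theorem stmt14 {m : ℕ} {E G : Fin m → Type*}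
    [∀ i, NormedAddCommGroup (E i)] [∀ i, NormedSpace ℝ (E i)] [∀ i, CompleteSpace (E i)]
    [∀ i, NormedAddCommGroup (G i)] [∀ i, NormedSpace ℝ (G i)] [∀ i, CompleteSpace (G i)]
    {F H : Type*} [NormedAddCommGroup F] [NormedSpace ℝ F] [CompleteSpace F]
    [NormedAddCommGroup H] [NormedSpace ℝ H] [CompleteSpace H]
    (n : Fin m → ℕ) (P : (∀ i, E i) → F) (hP : IsMultiPoly n P) (hPc : Continuous P)
    (hK : IsCompact (closure (P '' {x : ∀ i, E i | ∀ i, ‖x i‖ ≤ 1})))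
    (u : ∀ i, G i →L[ℝ] E i) (t : F →L[ℝ] H) :
    IsMultiPoly n (fun x : ∀ i, G i => t (P fun i => u i (x i))) ∧
    Continuous (fun x : ∀ i, G i => t (P fun i => u i (x i))) ∧
    IsCompact (closure ((fun x : ∀ i, G i => t (P fun i => u i (x i))) ''
      {x : ∀ i, G i | ∀ i, ‖x i‖ ≤ 1})) := by
  refine ⟨?_, ?_, ?_⟩
  · intro i x
    obtain ⟨A, hA⟩ := hP i (fun j => u j (x j))
    refine ⟨t.toLinearMap.compMultilinearMap
      (A.compLinearMap fun _ => (u i).toLinearMap), fun y => ?_⟩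
    have hupd : (fun j => u j (Function.update x i y j)) =
        Function.update (fun j => u j (x j)) i (u i y) := by
      funext j
      rcases eq_or_ne j i with rfl | hj
      · simp
      · simp [Function.update_of_ne hj]
    simp only [hupd, hA]
    rfl
  · exact t.continuous.comp (hPc.comp (continuous_pi fun i =>
      (u i).continuous.comp (continuous_apply i)))
  · set r : Fin m → ℝ := fun i => ‖u i‖ + 1 with hr
    have hrpos : ∀ i, 0 < r i := fun i => by positivity
    set C : ℝ := ∏ i, r i ^ n i with hC
    set SE : Set (∀ i, E i) := {x | ∀ i, ‖x i‖ ≤ 1} with hSE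
    have hsub : (fun x : ∀ i, G i => t (P fun i => u i (x i))) ''
        {x : ∀ i, G i | ∀ i, ‖x i‖ ≤ 1} ⊆ (fun v => C • t v) '' closure (P '' SE) := by
      rintro _ ⟨x, hx, rfl⟩
      set y : ∀ i, E i := fun i => (r i)⁻¹ • u i (x i) with hy
      have hyS : y ∈ SE := by
        intro i
        have h1 : ‖u i (x i)‖ ≤ r i := by
          calc ‖u i (x i)‖ ≤ ‖u i‖ * ‖x i‖ := (u i).le_opNorm _
            _ ≤ ‖u i‖ * 1 := by
                exact mul_le_mul_of_nonneg_left (hx i) (norm_nonneg _)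
            _ ≤ r i := by simp [hr]
        have h2 : ‖y i‖ = (r i)⁻¹ * ‖u i (x i)‖ := by
          have : y i = (r i)⁻¹ • u i (x i) := rfl
          rw [this, norm_smul, Real.norm_eq_abs, abs_of_pos (inv_pos.mpr (hrpos i))]
        rw [h2, inv_mul_le_iff₀ (hrpos i), mul_one]
        exact h1
      have huy : (fun i => u i (x i)) = fun i => r i • y i := by
        funext i
        simp [hy, smul_smul, mul_inv_cancel₀ (hrpos i).ne']
      have : P (fun i => u i (x i)) = C • P y := by
        rw [huy, hP.scale_all y r, hC]
      refine ⟨P y, subset_closure ⟨y, hyS, rfl⟩, ?_⟩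
      show C • t (P y) = t (P fun i => u i (x i))
      rw [this]
      simp
    have hcomp : IsCompact ((fun v => C • t v) '' closure (P '' SE)) :=
      hK.image ((t.continuous.const_smul C))
    exact hcomp.of_isClosed_subset isClosed_closure
      ((closure_minimal hsub hcomp.isClosed))
end

section
/- (Multipolynomial Bohnenblust–Hille inequality, sufficiency) Let n₁, …, n_m be positive integers and set M = n₁ + ⋯ + n_m. Assuming the polynomial Bohnenblust–Hille inequality for degree M (i.e., there is C_M ≥ 1 such that (Σ_{|β|=M} |c_β(Q)|^{p₀})^{1/p₀} ≤ C_M‖Q‖ for all continuous M-homogeneous scalar polynomials Q on c₀, with p₀ = 2M/(M+1)), then there is a constant C ≥ 1 such that for every continuous (n₁, …, n_m)-homogeneous polynomial P : c₀ × ⋯ × c₀ → 𝕂, (Σ_{|α^{(1)}|=n₁, …, |α^{(m)}|=n_m} |c_{α^{(1)}…α^{(m)}}(P)|^{p₀})^{1/p₀} ≤ C‖P‖. -/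
/-- Total degree of a finitely supported multi-index. -/
def degOf (α : ℕ →₀ ℕ) : ℕ := α.sum fun _ k => k

/-- Evaluation of the multipolynomial on `c₀ × ⋯ × c₀` with (finitely supported)
monomial coefficient family `c`:
`P(x⁽¹⁾,…,x⁽ᵐ⁾) = Σ_α c_α (x⁽¹⁾)^{α⁽¹⁾} ⋯ (x⁽ᵐ⁾)^{α⁽ᵐ⁾}`. -/
noncomputable def evalMP {m : ℕ} (c : (Fin m → (ℕ →₀ ℕ)) →₀ ℝ)
    (x : Fin m → ℕ → ℝ) : ℝ :=
  c.sum fun α a => a * ∏ i : Fin m, (α i).prod fun j k => (x i j) ^ k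

/-- The sup norm of the multipolynomial with coefficients `c` over the product of
unit balls. -/
noncomputable def mpNorm {m : ℕ} (c : (Fin m → (ℕ →₀ ℕ)) →₀ ℝ) : ℝ :=
  sSup {y : ℝ | ∃ x : Fin m → ℕ → ℝ, (∀ i j, |x i j| ≤ 1) ∧ y = |evalMP c x|}

/-!
An injection `e : Fin m × ℕ → ℕ` splits (part of) `ℕ` into `m` disjoint infinite pieces
`e (i, ·)`. Merging the multi-indices `α⁽¹⁾, …, α⁽ᵐ⁾` along `e` turns `P` into an
`M`-homogeneous polynomial `Q` on a single copy of `c₀`, with the same coefficients relabelled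
injectively, and `Q(y) = P(y ∘ e(1, ·), …, y ∘ e(m, ·))`. Hence `‖Q‖ ≤ ‖P‖` while the coefficient
`ℓ^{p₀}` sums agree, and the polynomial inequality for `Q` gives the one for `P` with the same
constant.
-/

section Merge

variable {m : ℕ} (e : Fin m × ℕ → ℕ)

noncomputable def mergeIndex (α : Fin m → (ℕ →₀ ℕ)) : ℕ →₀ ℕ :=
  ∑ i, (α i).mapDomain fun j => e (i, j)

theorem mergeIndex_apply (he : Function.Injective e) (α : Fin m → (ℕ →₀ ℕ)) (i : Fin m)
    (j : ℕ) : mergeIndex e α (e (i, j)) = α i j := by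
  rw [mergeIndex, Finset.sum_apply', Finset.sum_eq_single i]
  · exact Finsupp.mapDomain_apply (fun _ _ h => (Prod.ext_iff.mp (he h)).2) _ _
  · rintro i' - hne
    refine Finsupp.mapDomain_of_notMem_range _ _ ?_
    rintro ⟨j', hj'⟩
    exact hne (Prod.ext_iff.mp (he hj')).1
  · exact fun h => absurd (Finset.mem_univ i) h

theorem mergeIndex_injective (he : Function.Injective e) :
    Function.Injective (mergeIndex e : (Fin m → (ℕ →₀ ℕ)) → ℕ →₀ ℕ) := by
  intro α α' h
  ext i j
  rw [← mergeIndex_apply e he, ← mergeIndex_apply e he, h]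

theorem degOf_mergeIndex (α : Fin m → (ℕ →₀ ℕ)) :
    degOf (mergeIndex e α) = ∑ i, degOf (α i) := by
  unfold mergeIndex degOf
  rw [← Finsupp.sum_finsetSum_index (fun _ => rfl) (fun _ _ _ => rfl)]
  exact Finset.sum_congr rfl fun i _ =>
    Finsupp.sum_mapDomain_index (fun _ => rfl) (fun _ _ _ => rfl)

theorem prod_pow_mergeIndex (α : Fin m → (ℕ →₀ ℕ)) (y : ℕ → ℝ) :
    ((mergeIndex e α).prod fun j k => y j ^ k) =
      ∏ i, (α i).prod fun j k => y (e (i, j)) ^ k := by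
  unfold mergeIndex
  rw [← Finsupp.prod_finsetSum_index (fun _ => pow_zero _) (fun _ _ _ => pow_add _ _ _)]
  exact Finset.prod_congr rfl fun i _ =>
    Finsupp.prod_mapDomain_index (fun _ => pow_zero _) (fun _ _ _ => pow_add _ _ _)

noncomputable def mergeIndexEmb (he : Function.Injective e) :
    (Fin m → (ℕ →₀ ℕ)) ↪ (Fin 1 → (ℕ →₀ ℕ)) :=
  ⟨fun α _ => mergeIndex e α, fun _ _ h => mergeIndex_injective e he (congrFun h 0)⟩

theorem evalMP_embDomain_mergeIndexEmb (he : Function.Injective e)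
    (c : (Fin m → (ℕ →₀ ℕ)) →₀ ℝ) (y : Fin 1 → ℕ → ℝ) :
    evalMP (c.embDomain (mergeIndexEmb e he)) y = evalMP c fun i j => y 0 (e (i, j)) := by
  unfold evalMP
  rw [Finsupp.sum_embDomain]
  refine Finsupp.sum_congr fun α _ => ?_
  rw [Fin.prod_univ_one]
  exact congrArg _ (prod_pow_mergeIndex e α (y 0))

end Merge

section Norm

variable {m : ℕ}

theorem abs_evalMP_le_sum_abs (c : (Fin m → (ℕ →₀ ℕ)) →₀ ℝ) {x : Fin m → ℕ → ℝ}
    (hx : ∀ i j, |x i j| ≤ 1) : |evalMP c x| ≤ ∑ α ∈ c.support, |c α| := by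
  refine (Finset.abs_sum_le_sum_abs _ _).trans (Finset.sum_le_sum fun α _ => ?_)
  have hmonomial : |∏ i, (α i).prod fun j k => x i j ^ k| ≤ 1 := by
    rw [Finset.abs_prod]
    refine Finset.prod_le_one (fun _ _ => abs_nonneg _) fun i _ => ?_
    rw [Finsupp.prod, Finset.abs_prod]
    refine Finset.prod_le_one (fun _ _ => abs_nonneg _) fun j _ => ?_
    rw [abs_pow]
    exact pow_le_one₀ (abs_nonneg _) (hx i j)
  rw [abs_mul]
  exact mul_le_of_le_one_right (abs_nonneg _) hmonomial

theorem bddAbove_abs_evalMP (c : (Fin m → (ℕ →₀ ℕ)) →₀ ℝ) :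
    BddAbove {y : ℝ | ∃ x : Fin m → ℕ → ℝ, (∀ i j, |x i j| ≤ 1) ∧ y = |evalMP c x|} :=
  ⟨∑ α ∈ c.support, |c α|, by rintro _ ⟨x, hx, rfl⟩; exact abs_evalMP_le_sum_abs c hx⟩

theorem mpNorm_le_of_forall_exists_evalMP_eq {m' : ℕ} (c' : (Fin m' → (ℕ →₀ ℕ)) →₀ ℝ)
    (c : (Fin m → (ℕ →₀ ℕ)) →₀ ℝ)
    (h : ∀ y : Fin m' → ℕ → ℝ, (∀ i j, |y i j| ≤ 1) →
      ∃ x : Fin m → ℕ → ℝ, (∀ i j, |x i j| ≤ 1) ∧ evalMP c' y = evalMP c x) :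
    mpNorm c' ≤ mpNorm c := by
  refine csSup_le ⟨_, fun _ _ => 0, fun _ _ => by simp, rfl⟩ ?_
  rintro _ ⟨y, hy, rfl⟩
  obtain ⟨x, hx, hxy⟩ := h y hy
  exact le_csSup (bddAbove_abs_evalMP c) ⟨x, hx, by rw [hxy]⟩

end Norm

theorem mpNorm_embDomain_mergeIndexEmb_le {m : ℕ} {e : Fin m × ℕ → ℕ}
    (he : Function.Injective e) (c : (Fin m → (ℕ →₀ ℕ)) →₀ ℝ) :
    mpNorm (c.embDomain (mergeIndexEmb e he)) ≤ mpNorm c :=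
  mpNorm_le_of_forall_exists_evalMP_eq _ c fun y hy =>
    ⟨fun i j => y 0 (e (i, j)), fun _ _ => hy 0 _, evalMP_embDomain_mergeIndexEmb e he c y⟩

theorem stmt16_general (m : ℕ) (n : Fin m → ℕ)
    (M : ℕ) (hM : M = ∑ i, n i) (p₀ : ℝ)
    (CM : ℝ) (hCM : 1 ≤ CM)
    (hBH : ∀ c : (Fin 1 → (ℕ →₀ ℕ)) →₀ ℝ, (∀ α ∈ c.support, degOf (α 0) = M) →
      (∑ α ∈ c.support, |c α| ^ p₀) ^ (1 / p₀) ≤ CM * mpNorm c) :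
    ∃ C : ℝ, 1 ≤ C ∧
      ∀ c : (Fin m → (ℕ →₀ ℕ)) →₀ ℝ, (∀ α ∈ c.support, ∀ i, degOf (α i) = n i) →
        (∑ α ∈ c.support, |c α| ^ p₀) ^ (1 / p₀) ≤ C * mpNorm c := by
  refine ⟨CM, hCM, fun c hc => ?_⟩
  let e := Encodable.encode' (Fin m × ℕ)
  set Q := c.embDomain (mergeIndexEmb e e.injective)
  have hQ_homogeneous : ∀ β ∈ Q.support, degOf (β 0) = M := by
    intro β hβ
    rw [Finsupp.support_embDomain, Finset.mem_map] at hβ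
    obtain ⟨α, hα, rfl⟩ := hβ
    change degOf (mergeIndex e α) = M
    rw [degOf_mergeIndex, hM]
    exact Finset.sum_congr rfl fun i _ => hc α hα i
  have hQ_coeffs : ∑ β ∈ Q.support, |Q β| ^ p₀ = ∑ α ∈ c.support, |c α| ^ p₀ :=
    Finsupp.sum_embDomain (g := fun _ b => |b| ^ p₀)
  calc (∑ α ∈ c.support, |c α| ^ p₀) ^ (1 / p₀)
      = (∑ β ∈ Q.support, |Q β| ^ p₀) ^ (1 / p₀) := by rw [hQ_coeffs]
    _ ≤ CM * mpNorm Q := hBH Q hQ_homogeneous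
    _ ≤ CM * mpNorm c := by
      gcongr
      exact mpNorm_embDomain_mergeIndexEmb_le e.injective c

/-- Multipolynomial Bohnenblust–Hille inequality (sufficiency): the polynomial
BH inequality in degree `M = n₁ + ⋯ + n_m` with exponent `p₀ = 2M/(M+1)` implies
the corresponding inequality for `(n₁,…,n_m)`-homogeneous multipolynomials. -/
theorem stmt16 (m : ℕ) (hm : 0 < m) (n : Fin m → ℕ) (hn : ∀ i, 0 < n i)
    (M : ℕ) (hM : M = ∑ i, n i) (p₀ : ℝ) (hp₀ : p₀ = 2 * M / (M + 1))
    (CM : ℝ) (hCM : 1 ≤ CM)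
    (hBH : ∀ c : (Fin 1 → (ℕ →₀ ℕ)) →₀ ℝ, (∀ α ∈ c.support, degOf (α 0) = M) →
      (∑ α ∈ c.support, |c α| ^ p₀) ^ (1 / p₀) ≤ CM * mpNorm c) :
    ∃ C : ℝ, 1 ≤ C ∧
      ∀ c : (Fin m → (ℕ →₀ ℕ)) →₀ ℝ, (∀ α ∈ c.support, ∀ i, degOf (α i) = n i) →
        (∑ α ∈ c.support, |c α| ^ p₀) ^ (1 / p₀) ≤ C * mpNorm c :=
  stmt16_general m n M hM p₀ CM hCM hBH
end

section
/- (Multipolynomial Bohnenblust–Hille inequality, necessity) Let n₁, …, n_m be positive integers, M = n₁ + ⋯ + n_m, and suppose 0 < p is an exponent for which there exists a constant C ≥ 1 such that (Σ |c_{α^{(1)}…α^{(m)}}(P)|^p)^{1/p} ≤ C‖P‖ for all continuous (n₁, …, n_m)-homogeneous polynomials P : c₀ × ⋯ × c₀ → 𝕂. Then p ≥ 2M/(M+1). -/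
open Filter

def blockIndex (r l j : ℕ) : ℕ := j + r * l

lemma blockIndex_injective (r k : ℕ) :
    Function.Injective fun lj : Fin k × Fin r => blockIndex r lj.1 lj.2 :=
  Fin.val_injective.comp finProdFinEquiv.injective

noncomputable def blockMultiIndex (r : ℕ) {k : ℕ} (s : Fin k → Fin r) : ℕ →₀ ℕ :=
  ∑ l : Fin k, Finsupp.single (blockIndex r l (s l)) 1

lemma blockMultiIndex_blockIndex (r : ℕ) {k : ℕ} (s : Fin k → Fin r) (l : Fin k) (j : Fin r) :
    blockMultiIndex r s (blockIndex r l j) = if s l = j then 1 else 0 := by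
  classical
  have hiff (l' : Fin k) : blockIndex r l' (s l') = blockIndex r l j ↔ l' = l ∧ s l' = j :=
    ((blockIndex_injective r k).eq_iff (a := (l', s l')) (b := (l, j))).trans Prod.ext_iff
  simp [blockMultiIndex, Finsupp.finsetSum_apply, Finsupp.single_apply, hiff, ite_and]

lemma blockMultiIndex_injective (r k : ℕ) :
    Function.Injective (blockMultiIndex r (k := k)) := by
  intro s s' h
  funext l
  have := congrArg (fun α => α (blockIndex r l (s l))) h
  simpa [blockMultiIndex_blockIndex, eq_comm] using this

lemma degOf_blockMultiIndex (r : ℕ) {k : ℕ} (s : Fin k → Fin r) :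
    degOf (blockMultiIndex r s) = k := by
  rw [degOf, blockMultiIndex, ← Finsupp.sum_finsetSum_index (by simp) (by simp)]
  simp

lemma prod_pow_blockMultiIndex (r : ℕ) {k : ℕ} (s : Fin k → Fin r) (x : ℕ → ℝ) :
    ((blockMultiIndex r s).prod fun j e => x j ^ e) = ∏ l : Fin k, x (blockIndex r l (s l)) := by
  rw [blockMultiIndex, ← Finsupp.prod_finsetSum_index (by simp) (fun _ _ _ => pow_add _ _ _)]
  simp

section BlockPolynomial

variable {m : ℕ} (n : Fin m → ℕ) (r : ℕ)

noncomputable def blockFamily (s : (i : Fin m) → Fin (n i) → Fin r) : Fin m → ℕ →₀ ℕ :=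
  fun i => blockMultiIndex r (s i)

lemma blockFamily_injective : Function.Injective (blockFamily n r) :=
  fun _ _ h => funext fun i => blockMultiIndex_injective r (n i) (congrFun h i)

noncomputable def blockPolynomial (ε : ((i : Fin m) → Fin (n i) → Fin r) → ℝ) :
    (Fin m → ℕ →₀ ℕ) →₀ ℝ :=
  (Finsupp.equivFunOnFinite.symm ε).mapDomain (blockFamily n r)

variable {n r} (ε : ((i : Fin m) → Fin (n i) → Fin r) → ℝ)

lemma degOf_of_mem_support_blockPolynomial {α : Fin m → ℕ →₀ ℕ}
    (hα : α ∈ (blockPolynomial n r ε).support) (i : Fin m) : degOf (α i) = n i := by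
  classical
  obtain ⟨s, -, rfl⟩ := Finset.mem_image.mp (Finsupp.mapDomain_support hα)
  exact degOf_blockMultiIndex r (s i)

lemma evalMP_blockPolynomial (x : Fin m → ℕ → ℝ) :
    evalMP (blockPolynomial n r ε) x =
      ∑ s, ε s * ∏ i, ∏ l : Fin (n i), x i (blockIndex r l (s i l)) := by
  rw [evalMP, blockPolynomial, Finsupp.sum_mapDomain_index_inj (blockFamily_injective n r),
    Finsupp.sum_fintype _ _ (fun _ => zero_mul _)]
  simp only [Finsupp.coe_equivFunOnFinite_symm, blockFamily, prod_pow_blockMultiIndex]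

lemma sum_abs_rpow_blockPolynomial {p : ℝ} (hp : p ≠ 0) :
    ∑ α ∈ (blockPolynomial n r ε).support, |blockPolynomial n r ε α| ^ p = ∑ s, |ε s| ^ p := by
  change Finsupp.sum _ (fun _ a => |a| ^ p) = _
  rw [blockPolynomial, Finsupp.sum_mapDomain_index_inj (blockFamily_injective n r),
    Finsupp.sum_fintype _ _ (fun _ => by simp [Real.zero_rpow hp])]
  simp only [Finsupp.coe_equivFunOnFinite_symm]

lemma mpNorm_blockPolynomial_le {B : ℝ} (hB : 0 ≤ B)
    (hε : ∀ y : (i : Fin m) → Fin (n i) → ℕ → ℝ, (∀ i l j, |y i l j| ≤ 1) →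
      |∑ s, ε s * ∏ i, ∏ l, y i l (s i l)| ≤ B) :
    mpNorm (blockPolynomial n r ε) ≤ B := by
  refine Real.sSup_le ?_ hB
  rintro _ ⟨x, hx, rfl⟩
  rw [evalMP_blockPolynomial]
  exact hε (fun i l j => x i (blockIndex r l j)) fun i l j => hx i _

lemma sum_abs_rpow_blockPolynomial_of_sign {p : ℝ} (hp : p ≠ 0) (hε : ∀ s, ε s = 1 ∨ ε s = -1) :
    ∑ α ∈ (blockPolynomial n r ε).support, |blockPolynomial n r ε α| ^ p =
      (r : ℝ) ^ ∑ i, n i := by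
  have habs (s : (i : Fin m) → Fin (n i) → Fin r) : |ε s| = 1 := (abs_eq zero_le_one).2 (hε s)
  simp [sum_abs_rpow_blockPolynomial ε hp, habs, Fintype.card_pi, Finset.prod_pow_eq_pow_sum]

end BlockPolynomial

lemma le_of_forall_natCast_rpow_le_mul_rpow {a b A : ℝ}
    (h : ∀ r : ℕ, (r : ℝ) ^ a ≤ A * (r : ℝ) ^ b) : a ≤ b := by
  by_contra! hba
  have hlim : Tendsto (fun r : ℕ => (r : ℝ) ^ (a - b)) atTop atTop :=
    (tendsto_rpow_atTop (sub_pos.2 hba)).comp tendsto_natCast_atTop_atTop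
  obtain ⟨r, hr1, hrA⟩ := ((eventually_ge_atTop 1).and (hlim.eventually_gt_atTop A)).exists
  have hr : (0 : ℝ) < r := by exact_mod_cast hr1
  rw [Real.rpow_sub hr, lt_div_iff₀ (Real.rpow_pos_of_pos hr b)] at hrA
  linarith [h r]

theorem stmt17_general (m : ℕ) (n : Fin m → ℕ)
    (M : ℕ) (hM : M = ∑ i, n i) (p : ℝ) (hp : 0 < p) (C : ℝ) (hC : 1 ≤ C)
    (hKSZ : ∃ K : ℝ, 0 < K ∧ ∀ r : ℕ,
      ∃ ε : ((i : Fin m) → Fin (n i) → Fin r) → ℝ,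
        (∀ s, ε s = 1 ∨ ε s = -1) ∧
        ∀ y : (i : Fin m) → Fin (n i) → ℕ → ℝ, (∀ i l j, |y i l j| ≤ 1) →
          |∑ s : (i : Fin m) → Fin (n i) → Fin r,
              ε s * ∏ i, ∏ l, y i l (s i l)|
            ≤ K * (r : ℝ) ^ (((M : ℝ) + 1) / 2))
    (hsumming : ∀ c : (Fin m → (ℕ →₀ ℕ)) →₀ ℝ,
      (∀ α ∈ c.support, ∀ i, degOf (α i) = n i) →
      (∑ α ∈ c.support, |c α| ^ p) ^ (1 / p) ≤ C * mpNorm c) :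
    p ≥ 2 * M / (M + 1) := by
  obtain ⟨K, hK, hKSZ⟩ := hKSZ
  have hgrowth (r : ℕ) :
      (r : ℝ) ^ ((M : ℝ) / p) ≤ C * K * (r : ℝ) ^ (((M : ℝ) + 1) / 2) := by
    obtain ⟨ε, hε, hεbd⟩ := hKSZ r
    have hnorm := mpNorm_blockPolynomial_le ε (by positivity) hεbd
    have hBH := hsumming _ fun α hα => degOf_of_mem_support_blockPolynomial ε hα
    rw [sum_abs_rpow_blockPolynomial_of_sign ε hp.ne' hε, ← hM, ← Real.rpow_natCast,
      ← Real.rpow_mul r.cast_nonneg, mul_one_div] at hBH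
    calc (r : ℝ) ^ ((M : ℝ) / p) ≤ C * mpNorm (blockPolynomial n r ε) := hBH
      _ ≤ C * (K * (r : ℝ) ^ (((M : ℝ) + 1) / 2)) :=
        mul_le_mul_of_nonneg_left hnorm (by linarith)
      _ = C * K * (r : ℝ) ^ (((M : ℝ) + 1) / 2) := by ring
  have hexp := le_of_forall_natCast_rpow_le_mul_rpow hgrowth
  rw [div_le_div_iff₀ hp two_pos] at hexp
  rw [ge_iff_le, div_le_iff₀ (by positivity)]
  linarith

/-- Multipolynomial Bohnenblust–Hille inequality (necessity): if an exponent
`p > 0` works for all `(n₁,…,n_m)`-homogeneous multipolynomials on `c₀ × ⋯ × c₀`,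
then `p ≥ 2M/(M+1)` where `M = n₁ + ⋯ + n_m`. The Kahane–Salem–Zygmund
inequality is taken as a hypothesis. -/
theorem stmt17 (m : ℕ) (hm : 0 < m) (n : Fin m → ℕ) (hn : ∀ i, 0 < n i)
    (M : ℕ) (hM : M = ∑ i, n i) (p : ℝ) (hp : 0 < p) (C : ℝ) (hC : 1 ≤ C)
    (hKSZ : ∃ K : ℝ, 0 < K ∧ ∀ r : ℕ,
      ∃ ε : ((i : Fin m) → Fin (n i) → Fin r) → ℝ,
        (∀ s, ε s = 1 ∨ ε s = -1) ∧
        ∀ y : (i : Fin m) → Fin (n i) → ℕ → ℝ, (∀ i l j, |y i l j| ≤ 1) →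
          |∑ s : (i : Fin m) → Fin (n i) → Fin r,
              ε s * ∏ i, ∏ l, y i l (s i l)|
            ≤ K * (r : ℝ) ^ (((M : ℝ) + 1) / 2))
    (hsumming : ∀ c : (Fin m → (ℕ →₀ ℕ)) →₀ ℝ,
      (∀ α ∈ c.support, ∀ i, degOf (α i) = n i) →
      (∑ α ∈ c.support, |c α| ^ p) ^ (1 / p) ≤ C * mpNorm c) :
    p ≥ 2 * M / (M + 1) :=
  stmt17_general m n M hM p hp C hC hKSZ hsumming
end

section
/- Fix m, n₁, …, n_m and let M = n₁ + ⋯ + n_m. For each r, let T_r be an M-linear form on c₀ of the form T_r(x^{(1)},…,x^{(M)}) = Σ_{i₁,…,i_M=1}^r ε_{i₁…i_M} x^{(1)}_{i₁}⋯x^{(M)}_{i_M} with signs ε ∈ {±1}. Define P_r : c₀^m → 𝕂 by grouping the M arguments of T_r into m blocks of sizes n₁, …, n_m, feeding the i-th input of P_r (restricted along a partition of ℕ into disjoint infinite subsets) into all n_i arguments of the i-th block. Then P_r is an (n₁, …, n_m)-homogeneous polynomial, ‖P_r‖ ≤ ‖T_r‖, and Σ |c_α(P_r)|^p = r^M for every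 p > 0. -/
/-- `P : (ℕ → ℝ)^m → ℝ` is an `(n₁,…,n_m)`-homogeneous polynomial (algebraic
version): separately, in each variable, the diagonal of an `n i`-linear map. -/
def IsMultiPolyAlg {m : ℕ} (n : Fin m → ℕ) (P : (Fin m → ℕ → ℝ) → ℝ) : Prop :=
  ∀ (i : Fin m) (x : Fin m → ℕ → ℝ),
    ∃ A : MultilinearMap ℝ (fun _ : Fin (n i) => (ℕ → ℝ)) ℝ,
      ∀ y : ℕ → ℝ, P (Function.update x i y) = A (fun _ => y)

/-- The multipolynomial `P_r` obtained from the Kahane–Salem–Zygmund M-linear form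
`T_r` by grouping its `M` arguments into `m` blocks of sizes `n₁,…,n_m` along a
partition of ℕ (realized by the maps `e i l` with disjoint ranges) is an
`(n₁,…,n_m)`-homogeneous polynomial, satisfies `‖P_r‖ ≤ ‖T_r‖`, and its
coefficients satisfy `Σ |c_α(P_r)|^p = r^M` for every `p > 0`. -/
theorem stmt18 (m : ℕ) (n : Fin m → ℕ) (hn : ∀ i, 0 < n i)
    (M : ℕ) (hM : M = ∑ i, n i) (r : ℕ)
    (ε : ((i : Fin m) → Fin (n i) → Fin r) → ℝ) (hε : ∀ s, ε s = 1 ∨ ε s = -1)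
    (e : (i : Fin m) → Fin (n i) → ℕ → ℕ)
    (he : ∀ i l, Function.Injective (e i l))
    (hdisj : ∀ i, ∀ l l' : Fin (n i), l ≠ l' →
      Disjoint (Set.range (e i l)) (Set.range (e i l')))
    (P : (Fin m → ℕ → ℝ) → ℝ)
    (hP : ∀ x, P x = ∑ s : (i : Fin m) → Fin (n i) → Fin r,
      ε s * ∏ i, ∏ l, x i (e i l (s i l))) :
    IsMultiPolyAlg n P ∧
    sSup {y : ℝ | ∃ x : Fin m → ℕ → ℝ, (∀ i j, |x i j| ≤ 1) ∧ y = |P x|}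
      ≤ sSup {y : ℝ | ∃ z : (i : Fin m) → Fin (n i) → ℕ → ℝ,
          (∀ i l j, |z i l j| ≤ 1) ∧
          y = |∑ s : (i : Fin m) → Fin (n i) → Fin r,
                ε s * ∏ i, ∏ l, z i l (s i l)|} ∧
    ∃ c : (Fin m → (ℕ →₀ ℕ)) →₀ ℝ,
      (∀ x, evalMP c x = P x) ∧
      (∀ α ∈ c.support, ∀ i, degOf (α i) = n i) ∧
      ∀ p : ℝ, 0 < p → ∑ α ∈ c.support, |c α| ^ p = (r : ℝ) ^ M := by
  classical
  -- the monomial multi-index attached to a choice `s`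
  set αm : ((i : Fin m) → Fin (n i) → Fin r) → (Fin m → (ℕ →₀ ℕ)) :=
    fun s i => ∑ l, Finsupp.single (e i l (s i l)) 1 with hαm
  have hval : ∀ s i (l : Fin (n i)) (t : Fin r),
      αm s i (e i l t) = if s i l = t then 1 else 0 := by
    intro s i l t
    rw [hαm]
    rw [Finsupp.finset_sum_apply]
    rw [Finset.sum_eq_single l]
    · rw [Finsupp.single_apply]
      by_cases h : s i l = t
      · simp [h]
      · have : e i l (s i l) ≠ e i l t := fun hc => h (Fin.val_injective ((he i l) hc))
        simp [this, h]
    · intro l' _ hl'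
      rw [Finsupp.single_apply]
      have : e i l' (s i l') ≠ e i l t := by
        intro hc
        exact (Set.disjoint_left.1 (hdisj i l' l hl')) ⟨s i l', rfl⟩ ⟨t, hc.symm⟩
      simp [this]
    · intro h; exact absurd (Finset.mem_univ l) h
  have hinj : Function.Injective αm := by
    intro s s' h
    funext i l
    have h1 := DFunLike.congr_fun (congrFun h i) (e i l (s' i l))
    rw [hval, hval] at h1
    simp only [if_pos rfl] at h1
    by_contra hne
    rw [if_neg hne] at h1
    exact one_ne_zero h1.symm
  set c : (Fin m → (ℕ →₀ ℕ)) →₀ ℝ :=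
    ∑ s, Finsupp.single (αm s) (ε s) with hc
  have hεne : ∀ s, ε s ≠ 0 := by
    intro s; rcases hε s with h | h <;> rw [h] <;> norm_num
  have hcapp : ∀ s, c (αm s) = ε s := by
    intro s
    rw [hc, Finsupp.finset_sum_apply]
    rw [Finset.sum_eq_single s]
    · simp [Finsupp.single_apply]
    · intro s' _ hs'
      rw [Finsupp.single_apply, if_neg (fun hc => hs' (hinj hc))]
    · intro h; exact absurd (Finset.mem_univ s) h
  have hsupp : c.support = Finset.univ.image αm := by
    apply Finset.Subset.antisymm
    · refine (Finsupp.support_finset_sum).trans ?_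
      intro β hβ
      simp only [Finset.mem_biUnion] at hβ
      obtain ⟨s, _, hs⟩ := hβ
      have := Finsupp.support_single_subset hs
      simp only [Finset.mem_singleton] at this
      subst this
      exact Finset.mem_image_of_mem _ (Finset.mem_univ s)
    · intro β hβ
      simp only [Finset.mem_image] at hβ
      obtain ⟨s, _, rfl⟩ := hβ
      rw [Finsupp.mem_support_iff, hcapp]
      exact hεne s
  have hcard : (Finset.univ.image αm).card = r ^ M := by
    rw [Finset.card_image_of_injective _ hinj, Finset.card_univ, Fintype.card_pi]
    have : ∀ i : Fin m, Fintype.card (Fin (n i) → Fin r) = r ^ n i := by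
      intro i; simp [Fintype.card_fun]
    rw [Finset.prod_congr rfl (fun i _ => this i), hM,
      Finset.prod_pow_eq_pow_sum]
  have hmono : ∀ s (x : Fin m → ℕ → ℝ) (i : Fin m),
      ((αm s i).prod fun j k => (x i j) ^ k) = ∏ l, x i (e i l (s i l)) := by
    intro s x i
    rw [hαm]
    rw [← Finsupp.prod_finset_sum_index (fun j => pow_zero (x i j))
      (fun j k₁ k₂ => pow_add (x i j) k₁ k₂)]
    refine Finset.prod_congr rfl fun l _ => ?_
    simp [Finsupp.prod_single_index]
  refine ⟨?_, ?_, c, ?_, ?_, ?_⟩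
  · -- IsMultiPolyAlg
    intro i x
    refine ⟨∑ s : (i : Fin m) → Fin (n i) → Fin r,
      (ε s * ∏ i' ∈ Finset.univ.erase i, ∏ l, x i' (e i' l (s i' l))) •
        ((MultilinearMap.mkPiAlgebra ℝ (Fin (n i)) ℝ).compLinearMap
          (fun l => LinearMap.proj (e i l (s i l)))), ?_⟩
    intro y
    rw [hP]
    rw [MultilinearMap.sum_apply]
    refine Finset.sum_congr rfl fun s _ => ?_
    rw [MultilinearMap.smul_apply, MultilinearMap.compLinearMap_apply,
      MultilinearMap.mkPiAlgebra_apply]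
    have h1 : ∏ i', ∏ l, Function.update x i y i' (e i' l (s i' l)) =
        (∏ l, y (e i l (s i l))) *
          ∏ i' ∈ Finset.univ.erase i, ∏ l, x i' (e i' l (s i' l)) := by
      rw [← Finset.mul_prod_erase Finset.univ _ (Finset.mem_univ i)]
      congr 1
      · simp [Function.update_self]
      · refine Finset.prod_congr rfl fun i' hi' => ?_
        rw [Function.update_of_ne (Finset.ne_of_mem_erase hi')]
    rw [h1, smul_eq_mul]
    simp only [LinearMap.proj_apply]
    ring
  · -- sup norm inequality
    apply csSup_le_csSup
    · refine ⟨(Fintype.card ((i : Fin m) → Fin (n i) → Fin r) : ℝ), ?_⟩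
      rintro y ⟨z, hz, rfl⟩
      calc |∑ s : (i : Fin m) → Fin (n i) → Fin r,
              ε s * ∏ i, ∏ l, z i l (s i l)|
          ≤ ∑ s : (i : Fin m) → Fin (n i) → Fin r,
              |ε s * ∏ i, ∏ l, z i l (s i l)| := Finset.abs_sum_le_sum_abs _ _
        _ ≤ ∑ _s : (i : Fin m) → Fin (n i) → Fin r, (1 : ℝ) := by
            refine Finset.sum_le_sum fun s _ => ?_
            rw [abs_mul]
            have h1 : |ε s| = 1 := by
              rcases hε s with h | h <;> rw [h] <;> norm_num
            rw [h1, one_mul, Finset.abs_prod]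
            refine Finset.prod_le_one (fun i _ => abs_nonneg _) fun i _ => ?_
            rw [Finset.abs_prod]
            exact Finset.prod_le_one (fun l _ => abs_nonneg _)
              fun l _ => hz i l _
        _ = (Fintype.card ((i : Fin m) → Fin (n i) → Fin r) : ℝ) := by
            simp
    · exact ⟨|P fun _ _ => 0|, fun _ _ => 0, fun i j => by norm_num, rfl⟩
    · rintro y ⟨x, hx, rfl⟩
      exact ⟨fun i l j => x i (e i l j), fun i l j => hx i _, by rw [hP]⟩
  · -- evalMP c = P
    intro x
    rw [evalMP, Finsupp.sum, hsupp, Finset.sum_image (fun s _ s' _ h => hinj h),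
      hP]
    refine Finset.sum_congr rfl fun s _ => ?_
    rw [hcapp]
    congr 1
    exact Finset.prod_congr rfl fun i _ => hmono s x i
  · -- degrees
    intro β hβ i
    rw [hsupp] at hβ
    simp only [Finset.mem_image] at hβ
    obtain ⟨s, _, rfl⟩ := hβ
    rw [degOf, hαm]
    rw [← Finsupp.sum_finset_sum_index (fun _ => rfl) (fun _ _ _ => rfl)]
    simp [Finsupp.sum_single_index]
  · -- p-th power sum
    intro p hp
    rw [hsupp, Finset.sum_image (fun s _ s' _ h => hinj h)]
    have h1 : ∀ s : (i : Fin m) → Fin (n i) → Fin r, |c (αm s)| ^ p = 1 := by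
      intro s
      rw [hcapp]
      rcases hε s with h | h <;> rw [h] <;> simp [Real.one_rpow]
    rw [Finset.sum_congr rfl fun s _ => h1 s, Finset.sum_const, Finset.card_univ]
    have : Fintype.card ((i : Fin m) → Fin (n i) → Fin r) = r ^ M := by
      rw [← hcard, Finset.card_image_of_injective _ hinj, Finset.card_univ]
    rw [this]
    push_cast
    ring
end
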